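/- arXiv:2006.03421 — 10 statements merged into one kernel-verified Lean document; each statement's English description precedes it below -/
import Mathlib

section
/- Let U be a topological space, ι an index set, and k ∈ ι. For X ⊆ ᶦU define I_k(X) = {s ∈ ᶦU : s(k) ∈ int {a ∈ U : s[k↦a] ∈ X}}. Then for all X, Y ⊆ ᶦU: (i) I_k(X) ⊆ X; (ii) I_k(X ∩ Y) = I_k(X) ∩ I_k(Y); (iii) I_k(X) ⊆ I_k(I_k(X)); (iv) I_k(ᶦU) = ᶦU. Hence I_k is an S4 interior operator on ℘(ᶦU), so topological cylindric set algebras satisfy the interior-operator axioms (2)–(5) of topological cylindric algebras. -/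
/-- The concrete interior operator
`I_k(X) = {s : s(k) ∈ int {a ∈ U : s[k↦a] ∈ X}}` on `℘(ᶦU)`. -/
def intOp {U : Type*} [TopologicalSpace U] {ι : Type*} [DecidableEq ι]
    (k : ι) (X : Set (ι → U)) : Set (ι → U) :=
  {s | s k ∈ interior {a : U | Function.update s k a ∈ X}}

/-!
`s ∈ I_k(X)` says that `s k` is an interior point of the slice `Function.update s k ⁻¹' X`
of `X` through `s` along coordinate `k`. Updating coordinate `k` does not change the slice,
so the slice of `I_k(X)` through `s` is the interior of the slice of `X`, and each axiom of an
interior operator for `I_k` reduces to the same axiom for `interior` on `U`.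
-/

namespace IntOp

open Function

variable {U : Type*} [TopologicalSpace U] {ι : Type*} [DecidableEq ι] (k : ι)

theorem mem_intOp {X : Set (ι → U)} {s : ι → U} :
    s ∈ intOp k X ↔ s k ∈ interior (update s k ⁻¹' X) :=
  Iff.rfl

theorem update_preimage_intOp (X : Set (ι → U)) (s : ι → U) :
    update s k ⁻¹' intOp k X = interior (update s k ⁻¹' X) := by
  ext a
  have hslice : update (update s k a) k = update s k := funext fun b => update_idem a b s
  rw [Set.mem_preimage, mem_intOp, update_self, hslice]

theorem intOp_subset (X : Set (ι → U)) : intOp k X ⊆ X := fun s hs => by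
  have hmem := interior_subset ((mem_intOp k).1 hs)
  rwa [Set.mem_preimage, update_eq_self] at hmem

theorem intOp_inter (X Y : Set (ι → U)) : intOp k (X ∩ Y) = intOp k X ∩ intOp k Y := by
  ext s
  simp only [Set.mem_inter_iff, mem_intOp, Set.preimage_inter, interior_inter]

theorem intOp_intOp (X : Set (ι → U)) : intOp k (intOp k X) = intOp k X := by
  ext s
  rw [mem_intOp, update_preimage_intOp, interior_interior, mem_intOp]

theorem intOp_univ : intOp k (Set.univ : Set (ι → U)) = Set.univ := by
  ext s
  simp only [mem_intOp, Set.preimage_univ, interior_univ, Set.mem_univ]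

end IntOp

open IntOp in
/-- `I_k` is an S4 interior operator on `℘(ᶦU)`:
(i) `I_k(X) ⊆ X`; (ii) `I_k(X ∩ Y) = I_k(X) ∩ I_k(Y)`;
(iii) `I_k(X) ⊆ I_k(I_k(X))`; (iv) `I_k(ᶦU) = ᶦU`. -/
theorem intOp_is_interior_operator {U : Type*} [TopologicalSpace U] {ι : Type*}
    [DecidableEq ι] (k : ι) :
    (∀ X : Set (ι → U), intOp k X ⊆ X) ∧
    (∀ X Y : Set (ι → U), intOp k (X ∩ Y) = intOp k X ∩ intOp k Y) ∧
    (∀ X : Set (ι → U), intOp k X ⊆ intOp k (intOp k X)) ∧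
    intOp k (Set.univ : Set (ι → U)) = Set.univ :=
  ⟨intOp_subset k, intOp_inter k, fun X => (intOp_intOp k X).ge, intOp_univ k⟩
end

section
/- Let U be a topological space, ι an index set, and i, j ∈ ι with i ≠ j. Suppose X ⊆ ᶦU is independent of coordinate j, i.e., for every s ∈ X and every a ∈ U, s[j↦a] ∈ X. Define the substitution operator S(Y) = {s ∈ ᶦU : s[i↦s(j)] ∈ Y} for Y ⊆ ᶦU, and the interior operators I_i, I_j as usual. Then S(I_i(X)) = I_j(S(X)). (This is the concrete verification of axiom (7) of topological cylindric algebras, s_j^i I_i p = I_j s_j^i p for j ∉ Δp, in topological cylindric set algebras.) -/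
/-- The concrete substitution operator `S(Y) = {s : s[i↦s(j)] ∈ Y}`. -/
def subOp {U : Type*} {ι : Type*} [DecidableEq ι] (i j : ι)
    (Y : Set (ι → U)) : Set (ι → U) :=
  {s | Function.update s i (s j) ∈ Y}

/-!
Both sides say that `s j` is an interior point of a set of values: on the left the set
`{a | s[i↦a] ∈ X}`, on the right `{a | s[j↦a][i↦a] ∈ X}`. Since `X` does not see coordinate `j`,
these two sets coincide.
-/

open Function

section

variable {ι : Type*} [DecidableEq ι] {β : Type*}

theorem update_update_comm_of_eq (f : ι → β) (i j : ι) (a : β) :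
    update (update f j a) i a = update (update f i a) j a := by
  obtain rfl | hij := eq_or_ne i j
  · rfl
  · exact update_comm hij.symm a a f

theorem update_mem_iff_of_forall_update_mem {X : Set (ι → β)} {j : ι}
    (hX : ∀ s ∈ X, ∀ a, update s j a ∈ X) (s : ι → β) (a : β) :
    update s j a ∈ X ↔ s ∈ X := by
  refine ⟨fun h => ?_, fun h => hX s h a⟩
  simpa only [update_idem, update_eq_self] using hX _ h (s j)

end

theorem subOp_intOp_comm_general {U : Type*} [TopologicalSpace U] {ι : Type*} [DecidableEq ι]
    (i j : ι) (X : Set (ι → U))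
    (hX : ∀ s ∈ X, ∀ a : U, Function.update s j a ∈ X) :
    subOp i j (intOp i X) = intOp j (subOp i j X) := by
  ext s
  have fibre_eq : {a : U | update s i a ∈ X} = {a : U | update (update s j a) i a ∈ X} := by
    ext a
    simp only [Set.mem_ofPred_eq, update_update_comm_of_eq,
      update_mem_iff_of_forall_update_mem hX]
  simp only [subOp, intOp, Set.mem_ofPred_eq, update_self, update_idem, fibre_eq]

/-- If `X ⊆ ᶦU` is independent of coordinate `j` and `i ≠ j`, then
`S(I_i(X)) = I_j(S(X))`. This is the concrete verification of the axiom
`s_j^i I_i p = I_j s_j^i p` for `j ∉ Δp`. -/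
theorem subOp_intOp_comm {U : Type*} [TopologicalSpace U] {ι : Type*} [DecidableEq ι]
    (i j : ι) (hij : i ≠ j) (X : Set (ι → U))
    (hX : ∀ s ∈ X, ∀ a : U, Function.update s j a ∈ X) :
    subOp i j (intOp i X) = intOp j (subOp i j X) :=
  subOp_intOp_comm_general i j X hX
end

section
/- Let W be a set, (U_i)_{i∈I} a family of pairwise disjoint subsets of W, and ι an index set with at least two elements. Let V = ⋃_{i∈I} ᶦU_i ⊆ ᶦW, where ᶦU_i denotes the set of functions ι → W whose range is contained in U_i. For k ∈ ι and X ⊆ V define the relativized cylindrification c_k(X) = {s ∈ V : ∃ t ∈ X such that t(m) = s(m) for all m ∈ ι with m ≠ k}. Then for every j ∈ I, every k ∈ ι and every X ⊆ V: c_k(X) ∩ ᶦU_j = {s ∈ ᶦU_j : ∃ t ∈ X ∩ ᶦU_j such that t(m) = s(m) for all m ≠ k}. Hence the map X ↦ (X ∩ ᶦU_i)_{i∈I} from ℘(V) to ∏_{i∈I} ℘(ᶦU_i) commutes with cylindrifications. -/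
/-! Since `ι` has a coordinate `m ≠ k`, an element `t ∈ X ⊆ V` that agrees with `s ∈ ᶦU_j` off `k`
shares the value `t m = s m` with it; as the bases `U_i` are pairwise disjoint, the component
`ᶦU_i` containing `t` must be `ᶦU_j`. -/

open Function in
theorem index_eq_of_agree_off_point {W I ι : Type*} [Nontrivial ι] {U : I → Set W}
    (hdis : Pairwise (Disjoint on U)) {i j : I} {s t : ι → W} {k : ι}
    (ht : ∀ m, t m ∈ U i) (hs : ∀ m, s m ∈ U j) (hts : ∀ m, m ≠ k → t m = s m) : i = j := by
  obtain ⟨m, hm⟩ := exists_ne k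
  exact hdis.eq (Set.not_disjoint_iff.2 ⟨t m, ht m, hts m hm ▸ hs m⟩)

/-- Let `V = ⋃_{i∈I} ᶦU_i` with the `U_i` pairwise disjoint subsets of `W`, and `ι`
having at least two elements.  Relativized cylindrification
`c_k(X) = {s ∈ V : ∃ t ∈ X, t(m) = s(m) for all m ≠ k}` satisfies, for every `j ∈ I`,
`k ∈ ι` and `X ⊆ V`:
`c_k(X) ∩ ᶦU_j = {s ∈ ᶦU_j : ∃ t ∈ X ∩ ᶦU_j, t(m) = s(m) for all m ≠ k}`.
Hence `X ↦ (X ∩ ᶦU_i)_i` commutes with cylindrifications. -/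
theorem cyl_inter_component {W I ι : Type*} (hι : ∃ a b : ι, a ≠ b)
    (U : I → Set W) (hdis : Pairwise fun i i' => Disjoint (U i) (U i'))
    (V : Set (ι → W)) (hV : V = ⋃ i, {s : ι → W | ∀ m, s m ∈ U i})
    (j : I) (k : ι) (X : Set (ι → W)) (hX : X ⊆ V) :
    ({s ∈ V | ∃ t ∈ X, ∀ m, m ≠ k → t m = s m} ∩ {s : ι → W | ∀ m, s m ∈ U j}) =
      {s : ι → W | (∀ m, s m ∈ U j) ∧
        ∃ t ∈ X ∩ {u : ι → W | ∀ m, u m ∈ U j}, ∀ m, m ≠ k → t m = s m} := by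
  obtain ⟨a, b, hab⟩ := hι
  have : Nontrivial ι := nontrivial_of_ne a b hab
  subst hV
  ext s
  constructor
  · rintro ⟨⟨-, t, htX, hts⟩, hs⟩
    obtain ⟨i, ht⟩ := Set.mem_iUnion.1 (hX htX)
    obtain rfl := index_eq_of_agree_off_point hdis ht hs hts
    exact ⟨hs, t, ⟨htX, ht⟩, hts⟩
  · rintro ⟨hs, t, ⟨htX, -⟩, hts⟩
    exact ⟨⟨Set.mem_iUnion.2 ⟨j, hs⟩, t, htX, hts⟩, hs⟩
end

section
/- Let B be a countable Boolean algebra with ⊥ ≠ ⊤. Call a set D of nonzero elements of B dense if for every b ∈ B with b ≠ ⊥ there exists d ∈ D with d ≤ b. Then for every family 𝒟 of dense subsets of B with |𝒟| < cov K, there exists a proper filter G of B (⊤ ∈ G, ⊥ ∉ G, closed under binary meets, upward closed) such that G ∩ D ≠ ∅ for every D ∈ 𝒟. (Martin's axiom for countable Boolean algebras holds for families of fewer than cov K dense sets.) -/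
/-!
The lists `s : List ℤ` index a tree of open cells in `ℝ`: the children of the cell `s` are
the images of the intervals `(k, k + 1)` under a `4⁻¹`-Lipschitz open embedding of `ℝ` onto it,
so cells shrink along branches and every point outside a countable set lies in cells of every
depth. Enumerating the nonzero elements of `B` by `ℤ`, each node carries a greedy descending
chain in `B`. For a dense set `D`, the cells whose chain element lies below a member of `D` form
an open dense set; fewer than `cov K` of these have a common point `x`, and since the cells
containing `x` form a single branch, the chain elements along it generate the required filter.
-/

/-- `cov K`: the least cardinality of a family of nowhere dense subsets of `ℝ`
whose union is all of `ℝ`. -/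
noncomputable def covK : Cardinal :=
  sInf {c : Cardinal | ∃ (ι : Type) (A : ι → Set ℝ),
    (∀ i, IsNowhereDense (A i)) ∧ (⋃ i, A i) = Set.univ ∧ c = Cardinal.mk ι}

/-- A set `D` of nonzero elements of a Boolean algebra `B` is dense if every
nonzero `b ∈ B` lies above some `d ∈ D`. -/
def DenseSub {B : Type*} [BooleanAlgebra B] (D : Set B) : Prop :=
  (∀ d ∈ D, d ≠ ⊥) ∧ ∀ b : B, b ≠ ⊥ → ∃ d ∈ D, d ≤ b

open Set Topology
open scoped NNReal

lemma Real.isOpenEmbedding_sigmoid : IsOpenEmbedding Real.sigmoid :=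
  ⟨IsEmbedding.subtypeVal.comp isEmbedding_sigmoid, by rw [Real.range_sigmoid]; exact isOpen_Ioo⟩

lemma Real.lipschitzWith_sigmoid : LipschitzWith 4⁻¹ Real.sigmoid := by
  refine lipschitzWith_of_nnnorm_deriv_le (fun x => (Real.hasDerivAt_sigmoid x).differentiableAt)
    fun x => ?_
  rw [Real.deriv_sigmoid, ← NNReal.coe_le_coe, coe_nnnorm, Real.norm_eq_abs, NNReal.coe_inv,
    abs_of_nonneg (mul_nonneg (Real.sigmoid_nonneg x) (sub_nonneg.2 (Real.sigmoid_le_one x)))]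
  norm_num
  nlinarith [sq_nonneg (2 * Real.sigmoid x - 1)]

namespace RealTree

noncomputable def emb : List ℤ → ℝ → ℝ
  | [] => id
  | k :: s => emb s ∘ fun u => k + Real.sigmoid u

def cell (s : List ℤ) : Set ℝ := range (emb s)

lemma isOpenEmbedding_emb : ∀ s, IsOpenEmbedding (emb s)
  | [] => .id
  | k :: s => (isOpenEmbedding_emb s).comp
      ((Homeomorph.addLeft (k : ℝ)).isOpenEmbedding.comp Real.isOpenEmbedding_sigmoid)

lemma lipschitzWith_emb : ∀ s : List ℤ, LipschitzWith (4⁻¹ ^ s.length) (emb s)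
  | [] => LipschitzWith.id.weaken (by simp)
  | k :: s => by
    rw [List.length_cons, pow_succ]
    exact (lipschitzWith_emb s).comp fun u v => by
      simpa only [edist_add_left] using Real.lipschitzWith_sigmoid u v

lemma cell_nil : cell [] = univ := range_id

lemma cell_cons (k : ℤ) (s : List ℤ) : cell (k :: s) = emb s '' Ioo (k : ℝ) (k + 1) := by
  rw [cell, emb, range_comp, range_comp' (fun u => (k : ℝ) + u), Real.range_sigmoid,
    image_const_add_Ioo, add_zero]

lemma isOpen_cell (s : List ℤ) : IsOpen (cell s) := (isOpenEmbedding_emb s).isOpen_range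

lemma cell_nonempty (s : List ℤ) : (cell s).Nonempty := range_nonempty _

lemma cell_cons_subset (k : ℤ) (s : List ℤ) : cell (k :: s) ⊆ cell s :=
  range_comp_subset_range _ _

lemma cell_subset_of_isSuffix {s t : List ℤ} (h : s <:+ t) : cell t ⊆ cell s := by
  obtain ⟨l, rfl⟩ := h
  induction l with
  | nil => exact subset_rfl
  | cons k l ih => exact (cell_cons_subset k _).trans ih

lemma disjoint_cell_cons {k k' : ℤ} (h : k ≠ k') (s : List ℤ) :
    Disjoint (cell (k :: s)) (cell (k' :: s)) := by
  rw [cell_cons, cell_cons]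
  refine disjoint_image_of_injective (isOpenEmbedding_emb s).injective ?_
  rw [Set.disjoint_iff]
  rintro v ⟨hk, hk'⟩
  have hfloor : ∀ {j : ℤ}, v ∈ Ioo (j : ℝ) (j + 1) → ⌊v⌋ = j := fun hj =>
    Int.floor_eq_iff.2 ⟨hj.1.le, hj.2⟩
  exact h ((hfloor hk).symm.trans (hfloor hk'))

lemma eq_of_mem_cell_of_length_eq {x : ℝ} :
    ∀ {s t : List ℤ}, s.length = t.length → x ∈ cell s → x ∈ cell t → s = t
  | [], [], _, _, _ => rfl
  | k :: s, k' :: t, hlen, hs, ht => by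
    obtain rfl : s = t := eq_of_mem_cell_of_length_eq (Nat.succ.inj hlen)
      (cell_cons_subset k s hs) (cell_cons_subset k' t ht)
    by_contra hne
    exact (disjoint_cell_cons (fun h => hne (congrArg (· :: s) h)) s).notMem_of_mem_left hs ht

lemma isSuffix_or_isSuffix_of_mem_cell {x : ℝ} {s t : List ℤ} (hs : x ∈ cell s)
    (ht : x ∈ cell t) : s <:+ t ∨ t <:+ s := by
  wlog hlen : s.length ≤ t.length generalizing s t
  · exact (this ht hs (le_of_not_ge hlen)).symm
  left
  have hsuf : t.drop (t.length - s.length) <:+ t := List.drop_suffix _ _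
  rwa [eq_of_mem_cell_of_length_eq (by simp; omega) hs (cell_subset_of_isSuffix hsuf ht)]

def boundary : Set ℝ := ⋃ s, emb s '' range ((↑) : ℤ → ℝ)

lemma countable_boundary : boundary.Countable :=
  countable_iUnion fun _ => (countable_range _).image _

lemma exists_mem_cell_cons {x : ℝ} {s : List ℤ} (hx : x ∈ cell s) (hb : x ∉ boundary) :
    ∃ k, x ∈ cell (k :: s) := by
  obtain ⟨v, rfl⟩ := hx
  refine ⟨⌊v⌋, ?_⟩
  rw [cell_cons]
  refine mem_image_of_mem _ ⟨(Int.floor_le v).lt_of_ne fun h => hb ?_, Int.lt_floor_add_one v⟩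
  exact mem_iUnion.2 ⟨s, mem_image_of_mem _ ⟨_, h⟩⟩

lemma exists_length_eq_mem_cell {x : ℝ} (hb : x ∉ boundary) (n : ℕ) :
    ∃ s : List ℤ, s.length = n ∧ x ∈ cell s := by
  induction n with
  | zero => exact ⟨[], rfl, cell_nil ▸ mem_univ x⟩
  | succ n ih =>
    obtain ⟨s, rfl, hs⟩ := ih
    obtain ⟨k, hk⟩ := exists_mem_cell_cons hs hb
    exact ⟨k :: s, rfl, hk⟩

lemma cell_cons_subset_ball {x : ℝ} {k : ℤ} {s : List ℤ} (hx : x ∈ cell (k :: s)) :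
    cell (k :: s) ⊆ Metric.ball x (4⁻¹ ^ s.length) := by
  rw [cell_cons] at hx ⊢
  obtain ⟨v, hv, rfl⟩ := hx
  rintro _ ⟨w, hw, rfl⟩
  rw [Metric.mem_ball]
  calc dist (emb s w) (emb s v) ≤ (4⁻¹ ^ s.length : ℝ≥0) * dist w v :=
        (lipschitzWith_emb s).dist_le_mul w v
    _ < (4⁻¹ ^ s.length : ℝ≥0) * 1 := by
        gcongr
        rw [Real.dist_eq, abs_sub_lt_iff]; constructor <;> linarith [hv.1, hv.2, hw.1, hw.2]
    _ = 4⁻¹ ^ s.length := by simp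

lemma exists_cell_subset {U : Set ℝ} (hU : IsOpen U) (hne : U.Nonempty) :
    ∃ s, cell s ⊆ U := by
  obtain ⟨x, hxU, hxb⟩ := (countable_boundary.dense_compl ℝ).inter_open_nonempty U hU hne
  obtain ⟨ε, hε, hball⟩ := Metric.isOpen_iff.1 hU x hxU
  obtain ⟨n, hn⟩ := exists_pow_lt_of_lt_one hε (by norm_num : (4⁻¹ : ℝ) < 1)
  obtain ⟨s, rfl, hs⟩ := exists_length_eq_mem_cell hxb n
  obtain ⟨k, hk⟩ := exists_mem_cell_cons hs hxb
  refine ⟨k :: s, (cell_cons_subset_ball hk).trans ((Metric.ball_subset_ball ?_).trans hball)⟩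
  exact_mod_cast hn.le

lemma dense_biUnion_cell {S : Set (List ℤ)} (hS : ∀ s, ∃ k, k :: s ∈ S) :
    Dense (⋃ s ∈ S, cell s) := by
  refine dense_iff_inter_open.2 fun U hU hne => ?_
  obtain ⟨s, hs⟩ := exists_cell_subset hU hne
  obtain ⟨k, hk⟩ := hS s
  obtain ⟨x, hx⟩ := cell_nonempty (k :: s)
  exact ⟨x, hs (cell_cons_subset k s hx), mem_biUnion hk hx⟩

end RealTree

section GreedyChain

variable {α : Type*} [PartialOrder α] [BoundedOrder α]

open Classical in
/-- Surjectivity of `e` makes every `a ≠ ⊥` below `greedyChain e s` the value at some child. -/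
noncomputable def greedyChain (e : ℤ → α) : List ℤ → α
  | [] => ⊤
  | k :: s => if e k ≤ greedyChain e s then e k else greedyChain e s

lemma greedyChain_cons_of_le {e : ℤ → α} {k : ℤ} {s : List ℤ} (h : e k ≤ greedyChain e s) :
    greedyChain e (k :: s) = e k :=
  if_pos h

lemma greedyChain_cons_le (e : ℤ → α) (k : ℤ) (s : List ℤ) :
    greedyChain e (k :: s) ≤ greedyChain e s := by
  rw [greedyChain]
  split_ifs with h
  exacts [h, le_rfl]

lemma greedyChain_anti_of_isSuffix (e : ℤ → α) {s t : List ℤ} (h : s <:+ t) :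
    greedyChain e t ≤ greedyChain e s := by
  obtain ⟨l, rfl⟩ := h
  induction l with
  | nil => exact le_rfl
  | cons k l ih => exact (greedyChain_cons_le e k _).trans ih

lemma greedyChain_ne_bot [Nontrivial α] {e : ℤ → α} (he : ∀ k, e k ≠ ⊥) :
    ∀ s, greedyChain e s ≠ ⊥
  | [] => top_ne_bot
  | k :: s => by
    rw [greedyChain]
    split_ifs
    exacts [he k, greedyChain_ne_bot he s]

end GreedyChain

lemma covK_le_mk {ι : Type} {A : ι → Set ℝ} (hA : ∀ i, IsNowhereDense (A i))
    (hcover : ⋃ i, A i = univ) : covK ≤ Cardinal.mk ι :=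
  csInf_le (OrderBot.bddBelow _) ⟨ι, A, hA, hcover, rfl⟩

lemma nonempty_iInter_of_mk_lt_covK {ι : Type} (hι : Cardinal.mk ι < covK) {U : ι → Set ℝ}
    (hUo : ∀ i, IsOpen (U i)) (hUd : ∀ i, Dense (U i)) : (⋂ i, U i).Nonempty := by
  by_contra h
  refine (covK_le_mk (A := fun i => (U i)ᶜ) (fun i => ?_) ?_).not_gt hι
  · rw [(hUo i).isClosed_compl.isNowhereDense_iff, interior_eq_empty_iff_dense_compl,
      compl_compl]
    exact hUd i
  · rw [← compl_iInter, not_nonempty_iff_eq_empty.1 h, compl_empty]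

open RealTree in
/-- Martin's axiom for countable Boolean algebras holds for families of fewer than
`cov K` dense sets: if `B` is a countable nontrivial Boolean algebra and `𝒟` is a
family of fewer than `cov K` dense subsets of `B`, then there is a proper filter `G`
of `B` meeting every member of `𝒟`. -/
theorem MA_countable_below_covK {B : Type} [BooleanAlgebra B] [Countable B] [Nontrivial B]
    (ι : Type) (𝒟 : ι → Set B) (hcard : Cardinal.mk ι < covK)
    (hdense : ∀ i, DenseSub (𝒟 i)) :
    ∃ G : Set B, ⊤ ∈ G ∧ ⊥ ∉ G ∧ (∀ a ∈ G, ∀ b ∈ G, a ⊓ b ∈ G) ∧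
      (∀ a ∈ G, ∀ b : B, a ≤ b → b ∈ G) ∧ ∀ i, ∃ d ∈ 𝒟 i, d ∈ G := by
  have : Nonempty {p : B // p ≠ ⊥} := ⟨⟨⊤, top_ne_bot⟩⟩
  obtain ⟨e, he⟩ := exists_surjective_nat {p : B // p ≠ ⊥}
  let c := greedyChain fun k : ℤ => (e k.toNat : B)
  have hc : ∀ s, c s ≠ ⊥ := greedyChain_ne_bot fun k => (e k.toNat).2
  let forcing i : Set (List ℤ) := {s | ∃ d ∈ 𝒟 i, c s ≤ d}
  have hchild : ∀ i s, ∃ k, k :: s ∈ forcing i := fun i s => by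
    obtain ⟨d, hd, hds⟩ := (hdense i).2 (c s) (hc s)
    obtain ⟨n, hn⟩ := he ⟨d, (hdense i).1 d hd⟩
    have hen : (e (n : ℤ).toNat : B) = d := by simp [hn]
    exact ⟨n, d, hd, ((greedyChain_cons_of_le (by rwa [hen])).trans hen).le⟩
  obtain ⟨x, hx⟩ := nonempty_iInter_of_mk_lt_covK hcard
    (fun i => isOpen_biUnion fun s _ => isOpen_cell s) (fun i => dense_biUnion_cell (hchild i))
  refine ⟨{b | ∃ s, x ∈ cell s ∧ c s ≤ b}, ⟨[], cell_nil ▸ mem_univ x, le_top⟩,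
    fun ⟨s, _, hs⟩ => hc s (le_bot_iff.1 hs), ?_,
    fun a ⟨s, hxs, ha⟩ b hab => ⟨s, hxs, ha.trans hab⟩, fun i => ?_⟩
  · rintro a ⟨s, hxs, ha⟩ b ⟨t, hxt, hb⟩
    rcases isSuffix_or_isSuffix_of_mem_cell hxs hxt with hst | hts
    · exact ⟨t, hxt, le_inf ((greedyChain_anti_of_isSuffix _ hst).trans ha) hb⟩
    · exact ⟨s, hxs, le_inf ha ((greedyChain_anti_of_isSuffix _ hts).trans hb)⟩
  · obtain ⟨s, ⟨d, hd, hsd⟩, hxs⟩ := mem_iUnion₂.1 (mem_iInter.1 hx i)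
    exact ⟨d, hd, s, hxs, hsd⟩
end

section
/- There exist a countable Boolean algebra B with ⊥ ≠ ⊤ and a family 𝒟 of dense subsets of B with |𝒟| = cov K (where D ⊆ B ∖ {⊥} is dense if for every b ≠ ⊥ there exists d ∈ D with d ≤ b) such that no proper filter G of B (⊤ ∈ G, ⊥ ∉ G, closed under binary meets, upward closed) satisfies G ∩ D ≠ ∅ for every D ∈ 𝒟. Hence cov K is the largest cardinal κ such that Martin's axiom for countable Boolean algebras holds for all families of fewer than κ dense sets. -/
open Set Filter Topology

lemma Set.Countable.supClosure {α : Type*} [SemilatticeSup α] {s : Set α} (hs : s.Countable) :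
    (supClosure s).Countable := by
  have hfin : {t : Finset α | ↑t ⊆ s}.Countable := by
    simpa using (countable_ofPred_finite_subset hs).preimage Finset.coe_injective
  refine (hfin.biUnion fun t _ ↦ countable_iUnion fun ht : t.Nonempty ↦
    countable_singleton (t.sup' ht id)).mono ?_
  rintro _ ⟨t, ht, hts, rfl⟩
  exact mem_biUnion hts (mem_iUnion_of_mem ht rfl)

namespace BooleanSubalgebra

lemma countable_closure {α : Type*} [BooleanAlgebra α] {s : Set α} (hs : s.Countable)
    (hinf : InfClosed s) (hbot : ⊥ ∈ s) (htop : ⊤ ∈ s) : (closure s : Set α).Countable := by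
  have hL : latticeClosure s = supClosure s := by rw [← supClosure_infClosure, hinf.infClosure_eq]
  set L := latticeClosure s
  have : Countable L := (hL ▸ hs.supClosure).to_subtype
  refine (countable_range fun t : Finset (L × L) ↦ t.sup fun x ↦ x.1.1 \ x.2.1).mono ?_
  intro a ha
  rw [← closure_latticeClosure, SetLike.mem_coe, mem_closure_iff_sup_sdiff
    isSublattice_latticeClosure (subset_latticeClosure hbot) (subset_latticeClosure htop)] at ha
  obtain ⟨t, rfl⟩ := ha
  exact ⟨t, rfl⟩

end BooleanSubalgebra

section CompactClosure

variable {X : Type*} [TopologicalSpace X]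

lemma nonempty_iInter_closure_of_finite_inter {ι : Type*} [Nonempty ι] {d : ι → Set X}
    (hd : ∀ i, IsCompact (closure (d i))) (hfip : ∀ u : Finset ι, (⋂ i ∈ u, d i).Nonempty) :
    (⋂ i, closure (d i)).Nonempty := by
  classical
  obtain ⟨i₀⟩ := ‹Nonempty ι›
  refine ((hd i₀).inter_iInter_nonempty _ (fun _ ↦ isClosed_closure) fun u ↦ ?_).mono
    inter_subset_right
  refine (hfip (insert i₀ u)).mono fun x hx ↦ ?_
  simp only [mem_iInter, Finset.mem_insert] at hx
  exact ⟨subset_closure (hx i₀ (Or.inl rfl)),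
    mem_iInter₂.2 fun i hi ↦ subset_closure (hx i (Or.inr hi))⟩

def compactClosureAvoiding (L : BooleanSubalgebra (Set X)) (A : Set X) : Set L :=
  {d | d ≠ ⊥ ∧ IsCompact (closure (d : Set X)) ∧ Disjoint (closure (d : Set X)) A}

lemma not_forall_exists_compactClosureAvoiding_mem {L : BooleanSubalgebra (Set X)}
    {ι : Type*} {A : ι → Set X} (hA : ⋃ i, A i = univ) {G : Set L} (htop : ⊤ ∈ G) (hbot : ⊥ ∉ G)
    (hinf : ∀ a ∈ G, ∀ b ∈ G, a ⊓ b ∈ G) :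
    ¬ ∀ i, ∃ d ∈ compactClosureAvoiding L (A i), d ∈ G := by
  intro hG
  choose d hd hdG using hG
  have hfip (u : Finset ι) : (⋂ i ∈ u, (d i : Set X)).Nonempty := by
    have hu : u.inf d ∈ G := Finset.inf_mem G htop hinf u d fun i _ ↦ hdG i
    refine (nonempty_iff_ne_empty.2 fun h ↦ hbot ?_).mono
      fun x hx ↦ mem_iInter₂.2 fun i hi ↦ (Finset.inf_le (f := d) hi : u.inf d ≤ d i) hx
    rwa [show u.inf d = ⊥ from Subtype.ext h] at hu
  have : Nonempty ι := by
    obtain ⟨x, -⟩ := hfip ∅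
    exact ⟨(mem_iUnion.1 (hA ▸ mem_univ x)).choose⟩
  obtain ⟨x, hx⟩ := nonempty_iInter_closure_of_finite_inter (fun i ↦ (hd i).2.1) hfip
  obtain ⟨j, hxj⟩ := mem_iUnion.1 (hA ▸ mem_univ x)
  exact (hd j).2.2.notMem_of_mem_left (mem_iInter.1 hx j) hxj

end CompactClosure

/-- The clopen sets of the lower limit topology. -/
def lowerLimitClopens (α : Type*) [TopologicalSpace α] [Preorder α] :
    BooleanSubalgebra (Set α) where
  carrier := {s | ∀ x, ∀ᶠ y in 𝓝[≥] x, y ∈ s ↔ x ∈ s}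
  supClosed' _ hs _ ht x := by
    filter_upwards [hs x, ht x] with y hys hyt using or_congr hys hyt
  infClosed' _ hs _ ht x := by
    filter_upwards [hs x, ht x] with y hys hyt using and_congr hys hyt
  compl_mem' hs x := by
    filter_upwards [hs x] with y hy using not_congr hy
  bot_mem' _ := .of_forall fun _ ↦ Iff.rfl

section lowerLimitClopens

variable {α : Type*} [TopologicalSpace α] [LinearOrder α]

lemma Iio_mem_lowerLimitClopens [OrderClosedTopology α] (r : α) :
    Iio r ∈ lowerLimitClopens α := by
  intro x
  rcases lt_or_ge x r with hx | hx
  · filter_upwards [nhdsWithin_le_nhds (Iio_mem_nhds hx)] with y hy using iff_of_true hy hx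
  · filter_upwards [self_mem_nhdsWithin] with y (hy : x ≤ y)
    exact iff_of_false (hx.trans hy).not_gt hx.not_gt

lemma Ico_mem_lowerLimitClopens [OrderClosedTopology α] (q r : α) :
    Ico q r ∈ lowerLimitClopens α := by
  rw [← Ici_inter_Iio, ← compl_Iio]
  exact BooleanSubalgebra.inf_mem (BooleanSubalgebra.compl_mem (Iio_mem_lowerLimitClopens q))
    (Iio_mem_lowerLimitClopens r)

lemma interior_nonempty_of_mem_lowerLimitClopens [OrderTopology α] [NoMaxOrder α]
    [DenselyOrdered α] {s : Set α} (hs : s ∈ lowerLimitClopens α) (hne : s.Nonempty) :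
    (interior s).Nonempty := by
  obtain ⟨x, hx⟩ := hne
  obtain ⟨u, hxu, hsub⟩ := mem_nhdsGE_iff_exists_Ico_subset.1 ((hs x).mono fun y hy ↦ hy.2 hx)
  exact (nonempty_Ioo.2 hxu).mono (interior_maximal (Ioo_subset_Ico_self.trans hsub) isOpen_Ioo)

end lowerLimitClopens

lemma exists_rat_Icc_subset_of_isOpen {U : Set ℝ} (hU : IsOpen U) (hne : U.Nonempty) :
    ∃ q r : ℚ, q < r ∧ Icc (q : ℝ) r ⊆ U := by
  obtain ⟨a, b, hab, hsub⟩ := hU.exists_Ioo_subset hne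
  obtain ⟨q, haq, hqb⟩ := exists_rat_btwn hab
  obtain ⟨r, hqr, hrb⟩ := exists_rat_btwn hqb
  exact ⟨q, r, by exact_mod_cast hqr, (Icc_subset_Ioo haq hrb).trans hsub⟩

def rationalIcoAlgebra : BooleanSubalgebra (Set ℝ) :=
  .closure (insert univ (range fun p : ℚ × ℚ ↦ Ico (p.1 : ℝ) p.2))

namespace rationalIcoAlgebra

lemma Ico_mem (q r : ℚ) : Ico (q : ℝ) r ∈ rationalIcoAlgebra :=
  BooleanSubalgebra.subset_closure (mem_insert_of_mem _ ⟨(q, r), rfl⟩)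

lemma le_lowerLimitClopens : rationalIcoAlgebra ≤ lowerLimitClopens ℝ :=
  BooleanSubalgebra.closure_le.2 <| insert_subset BooleanSubalgebra.top_mem <|
    range_subset_iff.2 fun _ ↦ Ico_mem_lowerLimitClopens _ _

instance : Countable rationalIcoAlgebra := by
  refine (BooleanSubalgebra.countable_closure ((countable_range _).insert _) ?_ ?_ ?_).to_subtype
  · refine InfClosed.insert_upperBounds ?_ fun _ _ ↦ le_top
    rintro _ ⟨p, rfl⟩ _ ⟨p', rfl⟩
    exact ⟨(max p.1 p'.1, min p.2 p'.2), by simp [Ico_inter_Ico]⟩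
  · exact mem_insert_of_mem _ ⟨(0, 0), Ico_self _⟩
  · exact mem_insert _ _

lemma denseSub_compactClosureAvoiding {A : Set ℝ} (hA : IsNowhereDense A) :
    DenseSub (compactClosureAvoiding rationalIcoAlgebra A) := by
  refine ⟨fun d hd ↦ hd.1, fun b hb ↦ ?_⟩
  have hbne : (b : Set ℝ).Nonempty := nonempty_iff_ne_empty.2 fun h ↦ hb (Subtype.ext h)
  have hU : (interior (b : Set ℝ) ∩ (closure A)ᶜ).Nonempty :=
    (interior_eq_empty_iff_dense_compl.1 hA).inter_open_nonempty _ isOpen_interior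
      (interior_nonempty_of_mem_lowerLimitClopens (le_lowerLimitClopens b.2) hbne)
  obtain ⟨q, r, hqr, hsub⟩ :=
    exists_rat_Icc_subset_of_isOpen (isOpen_interior.inter isClosed_closure.isOpen_compl) hU
  have hqr' : (q : ℝ) < r := by exact_mod_cast hqr
  have hcl : closure (Ico (q : ℝ) r) = Icc (q : ℝ) r := closure_Ico hqr'.ne
  refine ⟨⟨Ico (q : ℝ) r, Ico_mem q r⟩, ⟨fun h ↦ ?_, ?_, ?_⟩, ?_⟩
  · exact (nonempty_Ico.2 hqr').ne_empty (congrArg Subtype.val h)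
  · simpa [hcl] using isCompact_Icc
  · rw [hcl]
    exact (subset_compl_iff_disjoint_right.1 (hsub.trans inter_subset_right)).mono_right
      subset_closure
  · exact Ico_subset_Icc_self.trans (hsub.trans (inter_subset_left.trans interior_subset))

end rationalIcoAlgebra

lemma exists_isNowhereDense_cover_card_eq_covK :
    ∃ (ι : Type) (A : ι → Set ℝ), (∀ i, IsNowhereDense (A i)) ∧ ⋃ i, A i = univ ∧
      Cardinal.mk ι = covK := by
  have hsingleton (x : ℝ) : IsNowhereDense {x} := by
    rw [IsNowhereDense, closure_singleton, interior_singleton]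
  obtain ⟨ι, A, hA, hcov, hcard⟩ : covK ∈ _ :=
    csInf_mem ⟨_, ℝ, fun x ↦ {x}, hsingleton, iUnion_of_singleton _, rfl⟩
  exact ⟨ι, A, hA, hcov, hcard.symm⟩

/-- `cov K` is sharp for Martin's axiom for countable Boolean algebras: there exist a
countable nontrivial Boolean algebra `B` and a family of `cov K` many dense subsets of
`B` such that no proper filter of `B` meets them all. -/
theorem MA_countable_fails_at_covK :
    ∃ (B : Type) (_ : BooleanAlgebra B), Countable B ∧ Nontrivial B ∧
      ∃ (ι : Type) (𝒟 : ι → Set B), Cardinal.mk ι = covK ∧ (∀ i, DenseSub (𝒟 i)) ∧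
        ¬ ∃ G : Set B, ⊤ ∈ G ∧ ⊥ ∉ G ∧ (∀ a ∈ G, ∀ b ∈ G, a ⊓ b ∈ G) ∧
          (∀ a ∈ G, ∀ b : B, a ≤ b → b ∈ G) ∧ ∀ i, ∃ d ∈ 𝒟 i, d ∈ G := by
  obtain ⟨ι, A, hA, hcov, hcard⟩ := exists_isNowhereDense_cover_card_eq_covK
  refine ⟨rationalIcoAlgebra, inferInstance, inferInstance,
    ⟨⊥, ⊤, ne_of_apply_ne Subtype.val bot_ne_top⟩, ι,
    fun i ↦ compactClosureAvoiding rationalIcoAlgebra (A i), hcard,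
    fun i ↦ rationalIcoAlgebra.denseSub_compactClosureAvoiding (hA i), ?_⟩
  rintro ⟨G, htop, hbot, hinf, -, hG⟩
  exact not_forall_exists_compactClosureAvoiding_mem hcov htop hbot hinf hG
end

section
/- Let L be a countable first-order language, T a consistent L-theory, λ a cardinal with λ < 2^ℵ₀, and for each i < λ let Γ_i be a complete non-principal type over T in finitely many free variables. Then T has a model that omits every Γ_i, i.e., a model M such that for each i < λ no tuple of M satisfies every formula in Γ_i. (When the non-principal types to be omitted are maximal, fewer than continuum many types can be omitted.) -/
open FirstOrder FirstOrder.Language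

universe u v

/-- A formula `φ(x₀,…,x_{n−1})` is consistent with `T` if some `n`-tuple in some
model of `T` satisfies it. -/
def ConsistentWith {L : FirstOrder.Language.{u, v}} (T : L.Theory) {n : ℕ}
    (φ : L.Formula (Fin n)) : Prop :=
  ∃ (M : Theory.ModelType.{u, v, max u v} T) (v : Fin n → M), φ.Realize v

/-- A set `Γ` of formulas in the free variables `x₀,…,x_{n−1}` is non-principal
over `T` if for every formula `φ` consistent with `T` there is `γ ∈ Γ` such that
`φ ⊓ ∼γ` is consistent with `T`. -/
def NonPrincipal {L : FirstOrder.Language.{u, v}} (T : L.Theory) {n : ℕ}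
    (Γ : Set (L.Formula (Fin n))) : Prop :=
  ∀ φ : L.Formula (Fin n), ConsistentWith T φ →
    ∃ γ ∈ Γ, ConsistentWith T (φ ⊓ γ.not)

/-- `Γ` is a complete `n`-type of `T`: every finite subset of `Γ` is simultaneously
satisfiable by a single `n`-tuple in some model of `T`, and for every formula `ψ`
either `ψ ∈ Γ` or `∼ψ ∈ Γ`. -/
def IsCompleteType {L : FirstOrder.Language.{u, v}} (T : L.Theory) {n : ℕ}
    (Γ : Set (L.Formula (Fin n))) : Prop :=
  (∀ Γ₀ : Finset (L.Formula (Fin n)), ↑Γ₀ ⊆ Γ →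
    ∃ (M : Theory.ModelType.{u, v, max u v} T) (v : Fin n → M),
      ∀ γ ∈ Γ₀, Formula.Realize γ v) ∧
  ∀ ψ : L.Formula (Fin n), ψ ∈ Γ ∨ ψ.not ∈ Γ

/-!
Build a binary tree of finite sets of formulas in the variables `xᵢ`, `i : ℕ`, which play the
role of Henkin constants. Passing from level `k` to level `k + 1` splits the two children along
each of the first `k + 1` tuples of terms `t̄` (one child gets `γ(t̄)`, the other `¬γ(t̄)`, for some
`γ` keeping both sides consistent), then decides the `k`-th formula and adds a witness for the
`k`-th existential formula. Every branch `f : ℕ → Bool` is then a complete Henkin theory, so it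
describes a model of `T` whose elements are named by terms.

If `Γ` is non-principal, such a split at `t̄` exists as long as `Γ(t̄)` is consistent with one side;
if `Γ` is complete, `γ ∈ Γ` or `¬γ ∈ Γ`, so `Γ(t̄)` cannot lie on both sides. Hence two branches
containing `Γ(t̄)` agree beyond the level of `t̄` in the enumeration, and only finitely many
branches contain `Γ(t̄)`. Fewer than `2^ℵ₀` types and countably many tuples thus exclude fewer
than `2^ℵ₀` branches, and any remaining branch gives a model omitting every `Γᵢ`.
-/

namespace OmittingTypes

open scoped Classical

variable {L : FirstOrder.Language.{u, v}}

section Formulas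

variable {M : Type*} [L.Structure M]

theorem realize_iff_of_eqOn_freeVarFinset {α : Type*} [DecidableEq α] {φ : L.Formula α}
    {w w' : α → M} (h : Set.EqOn w w' φ.freeVarFinset) : φ.Realize w ↔ φ.Realize w' :=
  (BoundedFormula.realize_restrictFreeVar (f := id) (v := fun a => w a) (xs := default) w
    fun _ => rfl).symm.trans
  (BoundedFormula.realize_restrictFreeVar (f := id) (v := fun a => w a) w' fun a => h a.2)

/-- `∃ y, χ(x̄, y)`, the variable `y` being `Sum.inr 0`. -/
noncomputable def exVar (χ : L.Formula (ℕ ⊕ Fin 1)) : L.Formula ℕ :=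
  χ.iExs (Fin 1)

def instVar (χ : L.Formula (ℕ ⊕ Fin 1)) (j : ℕ) : L.Formula ℕ :=
  χ.relabel (Sum.elim id fun _ => j)

theorem realize_exVar {χ : L.Formula (ℕ ⊕ Fin 1)} {w : ℕ → M} :
    (exVar χ).Realize w ↔ ∃ a : M, χ.Realize (Sum.elim w fun _ => a) := by
  rw [exVar, Formula.realize_iExs]
  refine ⟨fun ⟨y, hy⟩ => ⟨y 0, ?_⟩, fun ⟨a, ha⟩ => ⟨fun _ => a, ha⟩⟩
  convert hy using 3
  exact congrArg y (Subsingleton.elim _ _)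

theorem realize_instVar {χ : L.Formula (ℕ ⊕ Fin 1)} {j : ℕ} {w : ℕ → M} :
    (instVar χ j).Realize w ↔ χ.Realize (Sum.elim w fun _ => w j) := by
  rw [instVar, Formula.realize_relabel]
  congr! 1
  ext (_ | _) <;> rfl

/-- `φ(t̄, y)`: the terms `t̄` replace the first `n` bound variables of `φ`, and the last one
becomes the free variable `y = Sum.inr 0`. -/
noncomputable def substInit {n : ℕ} (φ : L.BoundedFormula Empty (n + 1)) (t : Fin n → L.Term ℕ) :
    L.Formula (ℕ ⊕ Fin 1) :=
  φ.toFormula.subst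
    (Sum.elim Empty.elim (Fin.snoc (fun i => (t i).relabel Sum.inl) (Term.var (Sum.inr 0))))

theorem realize_substInit {n : ℕ} {φ : L.BoundedFormula Empty (n + 1)} {t : Fin n → L.Term ℕ}
    {w : ℕ → M} {b : M} :
    (substInit φ t).Realize (Sum.elim w fun _ => b) ↔
      φ.Realize default (Fin.snoc (fun i => (t i).realize w) b) := by
  rw [substInit, Formula.Realize, BoundedFormula.realize_subst, ← Formula.Realize,
    BoundedFormula.realize_toFormula]
  congr! 1
  ext i
  refine Fin.lastCases ?_ (fun j => ?_) i <;> simp [Term.realize_relabel]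

def occVars (q : Finset (L.Formula ℕ)) {n : ℕ} (t : Fin n → L.Term ℕ) : Finset ℕ :=
  q.biUnion BoundedFormula.freeVarFinset ∪ Finset.univ.biUnion fun i => (t i).varFinset

theorem mem_occVars_of_mem_freeVarFinset {q : Finset (L.Formula ℕ)} {n : ℕ}
    {t : Fin n → L.Term ℕ} {ψ : L.Formula ℕ} (hψ : ψ ∈ q) {a : ℕ} (ha : a ∈ ψ.freeVarFinset) :
    a ∈ occVars q t :=
  Finset.mem_union_left _ (Finset.mem_biUnion.2 ⟨ψ, hψ, ha⟩)

theorem mem_occVars_of_mem_varFinset (q : Finset (L.Formula ℕ)) {n : ℕ}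
    {t : Fin n → L.Term ℕ} (i : Fin n) {a : ℕ} (ha : a ∈ (t i).varFinset) : a ∈ occVars q t :=
  Finset.mem_union_right _ (Finset.mem_biUnion.2 ⟨i, Finset.mem_univ _, ha⟩)

/-- `⋀ q(ȳ) ∧ x̄ = t̄(ȳ)`, with `x̄` the variables `Sum.inl` and `ȳ` the variables `Sum.inr`. -/
noncomputable def imageMatrix (q : Finset (L.Formula ℕ)) {n : ℕ} (t : Fin n → L.Term ℕ) :
    L.Formula (Fin n ⊕ occVars q t) :=
  (Formula.iInf fun ψ : q => Formula.relabel Sum.inr (ψ.1.restrictFreeVar fun a =>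
      (⟨a, mem_occVars_of_mem_freeVarFinset ψ.2 a.2⟩ : occVars q t))) ⊓
    Formula.iInf fun i => Term.equal (Term.var (Sum.inl i))
      (((t i).restrictVar fun a =>
        (⟨a, mem_occVars_of_mem_varFinset q i a.2⟩ : occVars q t)).relabel Sum.inr)

theorem realize_imageMatrix {q : Finset (L.Formula ℕ)} {n : ℕ} {t : Fin n → L.Term ℕ}
    {a : Fin n → M} {y : occVars q t → M} {w : ℕ → M} (hyw : ∀ b, y b = w b) :
    (imageMatrix q t).Realize (Sum.elim a y) ↔
      (∀ ψ ∈ q, ψ.Realize w) ∧ (fun i => (t i).realize w) = a := by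
  simp only [imageMatrix, Formula.realize_inf, Formula.realize_iInf, Formula.realize_relabel,
    Formula.realize_equal, Term.realize_relabel, Term.realize_var, Sum.elim_inl, funext_iff]
  refine and_congr ⟨fun h ψ hψ => ?_, fun h ψ => ?_⟩ (forall_congr' fun i => ?_)
  · exact (BoundedFormula.realize_restrictFreeVar w fun b => hyw _).1 (h ⟨ψ, hψ⟩)
  · exact (BoundedFormula.realize_restrictFreeVar w fun b => hyw _).2 (h ψ ψ.2)
  · rw [Term.realize_restrictVar w fun b => hyw _, eq_comm]

/-- `∃ ȳ, ⋀ q(ȳ) ∧ x̄ = t̄(ȳ)`, which defines the image under `t̄` of the solution set of `q`. -/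
noncomputable def imageFormula (q : Finset (L.Formula ℕ)) {n : ℕ} (t : Fin n → L.Term ℕ) :
    L.Formula (Fin n) :=
  (imageMatrix q t).iExs (occVars q t)

theorem realize_imageFormula [Nonempty M] {q : Finset (L.Formula ℕ)} {n : ℕ}
    {t : Fin n → L.Term ℕ} {a : Fin n → M} :
    (imageFormula q t).Realize a ↔
      ∃ w : ℕ → M, (∀ ψ ∈ q, ψ.Realize w) ∧ (fun i => (t i).realize w) = a := by
  rw [imageFormula, Formula.realize_iExs]
  constructor
  · rintro ⟨y, hy⟩
    exact ⟨_, (realize_imageMatrix (w := fun b => if hb : b ∈ occVars q t then y ⟨b, hb⟩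
      else Classical.arbitrary M) fun b => (dif_pos b.2).symm).1 hy⟩
  · rintro ⟨w, hw⟩
    exact ⟨fun b => w b, (realize_imageMatrix fun _ => rfl).2 hw⟩

end Formulas

section Realizable

variable (T : L.Theory)

def Realizable (s : Finset (L.Formula ℕ)) : Prop :=
  ∃ (M : Theory.ModelType.{u, v, max u v} T) (w : ℕ → M), ∀ φ ∈ s, φ.Realize w

def FinitelyRealizable (D : Set (L.Formula ℕ)) : Prop :=
  ∀ s : Finset (L.Formula ℕ), ↑s ⊆ D → Realizable T s

variable {T}

theorem Realizable.mono {s s' : Finset (L.Formula ℕ)} (h : Realizable T s) (hs : s' ⊆ s) :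
    Realizable T s' :=
  let ⟨M, w, hw⟩ := h
  ⟨M, w, fun φ hφ => hw φ (hs hφ)⟩

theorem realizable_empty (hT : T.IsSatisfiable) : Realizable T ∅ :=
  ⟨hT.some, fun _ => Classical.arbitrary _, by simp⟩

theorem Realizable.insert_or_insert_not {s : Finset (L.Formula ℕ)} (h : Realizable T s)
    (φ : L.Formula ℕ) : Realizable T (insert φ s) ∨ Realizable T (insert φ.not s) := by
  obtain ⟨M, w, hw⟩ := h
  by_cases hφ : φ.Realize w
  · exact Or.inl ⟨M, w, (Finset.forall_mem_insert _ _ _).2 ⟨hφ, hw⟩⟩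
  · exact Or.inr ⟨M, w, (Finset.forall_mem_insert _ _ _).2 ⟨hφ, hw⟩⟩

theorem FinitelyRealizable.not_notMem_of_mem {D : Set (L.Formula ℕ)} (hD : FinitelyRealizable T D)
    {φ : L.Formula ℕ} (hφ : φ ∈ D) : φ.not ∉ D := fun hnφ => by
  obtain ⟨M, w, hw⟩ := hD {φ, φ.not} (by simp [Set.insert_subset_iff, hφ, hnφ])
  exact (hw φ.not (by simp)) (hw φ (by simp))

theorem FinitelyRealizable.realizable_insert {D : Set (L.Formula ℕ)}
    (hD : FinitelyRealizable T D) {s : Finset (L.Formula ℕ)} (hs : ↑s ⊆ D) {φ : L.Formula ℕ}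
    (hφ : φ ∈ D) : Realizable T (insert φ s) :=
  hD _ (by simpa using Set.insert_subset hφ hs)

theorem _root_.NonPrincipal.exists_realizable_insert_not {n : ℕ} {Γ : Set (L.Formula (Fin n))}
    (hΓ : NonPrincipal T Γ) {q : Finset (L.Formula ℕ)} (hq : Realizable T q)
    (t : Fin n → L.Term ℕ) : ∃ γ ∈ Γ, Realizable T (insert (γ.subst t).not q) := by
  obtain ⟨M, w, hw⟩ := hq
  obtain ⟨γ, hγ, N, a, ha⟩ :=
    hΓ (imageFormula q t) ⟨M, _, realize_imageFormula.2 ⟨w, hw, rfl⟩⟩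
  rw [Formula.realize_inf, Formula.realize_not] at ha
  obtain ⟨w', hw', rfl⟩ := realize_imageFormula.1 ha.1
  exact ⟨γ, hγ, N, w', (Finset.forall_mem_insert _ _ _).2
    ⟨Formula.realize_not.2 fun h => ha.2 (BoundedFormula.realize_subst.1 h), hw'⟩⟩

theorem Realizable.isSatisfiable {s : Finset (L.Formula ℕ)} (h : Realizable T s) :
    ((L.lhomWithConstants ℕ).onTheory T ∪ Formula.equivSentence '' ↑s).IsSatisfiable := by
  obtain ⟨M, w, hw⟩ := h
  let _ : (constantsOn ℕ).Structure M := constantsOn.structure w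
  have : M ⊨ (L.lhomWithConstants ℕ).onTheory T ∪ Formula.equivSentence '' ↑s := by
    refine Theory.Model.union ((LHom.onTheory_model _ _).2 inferInstance) ?_
    rw [Theory.model_iff]
    rintro _ ⟨ψ, hψ, rfl⟩
    exact (Formula.realize_equivSentence M ψ).2 (hw ψ hψ)
  exact Theory.Model.isSatisfiable M

theorem FinitelyRealizable.isSatisfiable {D : Set (L.Formula ℕ)} (hD : FinitelyRealizable T D) :
    ((L.lhomWithConstants ℕ).onTheory T ∪ Formula.equivSentence '' D).IsSatisfiable := by
  have hD' : (L.lhomWithConstants ℕ).onTheory T ∪ Formula.equivSentence '' D =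
      ⋃ s : {s : Finset (L.Formula ℕ) // ↑s ⊆ D},
        (L.lhomWithConstants ℕ).onTheory T ∪ Formula.equivSentence '' ↑s.1 := by
    refine subset_antisymm ?_ (Set.iUnion_subset fun s => Set.union_subset_union_right _
      (Set.image_mono s.2))
    rintro _ (hφ | ⟨φ, hφ, rfl⟩)
    · exact Set.mem_iUnion.2 ⟨⟨∅, by simp⟩, Or.inl hφ⟩
    · exact Set.mem_iUnion.2 ⟨⟨{φ}, by simpa using hφ⟩, Or.inr ⟨φ, by simp, rfl⟩⟩
  have : Nonempty {s : Finset (L.Formula ℕ) // ↑s ⊆ D} := ⟨⟨∅, by simp⟩⟩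
  rw [hD', Theory.isSatisfiable_directed_union_iff]
  · exact fun s => (hD s.1 s.2).isSatisfiable
  · intro s s'
    refine ⟨⟨s.1 ∪ s'.1, by simpa using ⟨s.2, s'.2⟩⟩, ?_, ?_⟩ <;>
      exact Set.union_subset_union_right _ (Set.image_mono (by simp))

end Realizable

section Steps

variable (T : L.Theory)

noncomputable def splitStep (s : Σ n, Fin n → L.Term ℕ)
    (pq : Finset (L.Formula ℕ) × Finset (L.Formula ℕ)) :
    Finset (L.Formula ℕ) × Finset (L.Formula ℕ) :=
  if h : ∃ γ : L.Formula (Fin s.1), Realizable T (insert (γ.subst s.2) pq.1) ∧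
      Realizable T (insert (γ.subst s.2).not pq.2) then
    (insert ((Classical.choose h).subst s.2) pq.1,
      insert ((Classical.choose h).subst s.2).not pq.2)
  else pq

noncomputable def decideStep (φ : L.Formula ℕ) (c : Finset (L.Formula ℕ)) :
    Finset (L.Formula ℕ) :=
  if Realizable T (insert φ c) then insert φ c else insert φ.not c

def usedVars (c : Finset (L.Formula ℕ)) (χ : L.Formula (ℕ ⊕ Fin 1)) : Finset ℕ :=
  c.biUnion BoundedFormula.freeVarFinset ∪ χ.freeVarFinset.toLeft

noncomputable def freshVar (c : Finset (L.Formula ℕ)) (χ : L.Formula (ℕ ⊕ Fin 1)) : ℕ :=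
  Classical.choose (Infinite.exists_notMem_finset (usedVars c χ))

noncomputable def henkinStep (χ : L.Formula (ℕ ⊕ Fin 1)) (c : Finset (L.Formula ℕ)) :
    Finset (L.Formula ℕ) :=
  if Realizable T (insert (exVar χ) c) then insert (instVar χ (freshVar c χ)) c else c

variable {T}

theorem le_splitStep (s : Σ n, Fin n → L.Term ℕ)
    (pq : Finset (L.Formula ℕ) × Finset (L.Formula ℕ)) : pq ≤ splitStep T s pq := by
  unfold splitStep
  split
  · exact ⟨Finset.subset_insert _ _, Finset.subset_insert _ _⟩
  · exact le_rfl

theorem realizable_splitStep (s : Σ n, Fin n → L.Term ℕ)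
    {pq : Finset (L.Formula ℕ) × Finset (L.Formula ℕ)} (hp : Realizable T pq.1)
    (hq : Realizable T pq.2) :
    Realizable T (splitStep T s pq).1 ∧ Realizable T (splitStep T s pq).2 := by
  unfold splitStep
  split_ifs with h
  exacts [Classical.choose_spec h, ⟨hp, hq⟩]

theorem subset_decideStep (φ : L.Formula ℕ) (c : Finset (L.Formula ℕ)) :
    c ⊆ decideStep T φ c := by
  unfold decideStep
  split <;> exact Finset.subset_insert _ _

theorem realizable_decideStep (φ : L.Formula ℕ) {c : Finset (L.Formula ℕ)}
    (hc : Realizable T c) : Realizable T (decideStep T φ c) := by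
  unfold decideStep
  split_ifs with h
  exacts [h, (hc.insert_or_insert_not φ).resolve_left h]

theorem mem_decideStep (φ : L.Formula ℕ) (c : Finset (L.Formula ℕ)) :
    φ ∈ decideStep T φ c ∨ φ.not ∈ decideStep T φ c := by
  unfold decideStep
  split
  exacts [Or.inl (Finset.mem_insert_self _ _), Or.inr (Finset.mem_insert_self _ _)]

theorem freshVar_notMem_freeVarFinset {c : Finset (L.Formula ℕ)} {φ : L.Formula ℕ} (hφ : φ ∈ c)
    (χ : L.Formula (ℕ ⊕ Fin 1)) : freshVar c χ ∉ φ.freeVarFinset := fun h =>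
  Classical.choose_spec (Infinite.exists_notMem_finset (usedVars c χ))
    (Finset.mem_union_left _ (Finset.mem_biUnion.2 ⟨φ, hφ, h⟩))

theorem inl_freshVar_notMem_freeVarFinset (c : Finset (L.Formula ℕ))
    (χ : L.Formula (ℕ ⊕ Fin 1)) : Sum.inl (freshVar c χ) ∉ χ.freeVarFinset := fun h =>
  Classical.choose_spec (Infinite.exists_notMem_finset (usedVars c χ))
    (Finset.mem_union_right _ (Finset.mem_toLeft.2 h))

theorem subset_henkinStep (χ : L.Formula (ℕ ⊕ Fin 1)) (c : Finset (L.Formula ℕ)) :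
    c ⊆ henkinStep T χ c := by
  unfold henkinStep
  split
  exacts [Finset.subset_insert _ _, subset_rfl]

theorem realizable_henkinStep (χ : L.Formula (ℕ ⊕ Fin 1)) {c : Finset (L.Formula ℕ)}
    (hc : Realizable T c) : Realizable T (henkinStep T χ c) := by
  unfold henkinStep
  split_ifs with h
  · obtain ⟨M, w, hw⟩ := h
    obtain ⟨hex, hwc⟩ := (Finset.forall_mem_insert _ _ _).1 hw
    obtain ⟨a, ha⟩ := realize_exVar.1 hex
    -- the fresh variable can be reassigned to the witness without disturbing `c` or `χ`
    refine ⟨M, Function.update w (freshVar c χ) a, (Finset.forall_mem_insert _ _ _).2 ⟨?_, ?_⟩⟩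
    · rw [realize_instVar, Function.update_self]
      refine (realize_iff_of_eqOn_freeVarFinset ?_).1 ha
      rintro (b | b) hb
      · exact (Function.update_of_ne (fun (e : b = freshVar c χ) =>
          inl_freshVar_notMem_freeVarFinset c χ (e ▸ hb)) _ _).symm
      · rfl
    · refine fun φ hφ => (realize_iff_of_eqOn_freeVarFinset fun b hb => ?_).1 (hwc φ hφ)
      exact (Function.update_of_ne (fun (e : b = freshVar c χ) =>
        freshVar_notMem_freeVarFinset hφ χ (e ▸ hb)) _ _).symm
  · exact hc

theorem exists_instVar_mem_henkinStep {χ : L.Formula (ℕ ⊕ Fin 1)} {c : Finset (L.Formula ℕ)}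
    (h : Realizable T (insert (exVar χ) c)) : ∃ j, instVar χ j ∈ henkinStep T χ c :=
  ⟨freshVar c χ, by rw [henkinStep, if_pos h]; exact Finset.mem_insert_self _ _⟩

end Steps

section HenkinModel

variable (T : L.Theory) in
structure IsHenkinComplete (D : Set (L.Formula ℕ)) : Prop where
  finitelyRealizable : FinitelyRealizable T D
  mem_or_not_mem : ∀ φ, φ ∈ D ∨ φ.not ∈ D
  exists_instVar_mem : ∀ χ, exVar χ ∈ D → ∃ j, instVar χ j ∈ D

variable {T : L.Theory} {D : Set (L.Formula ℕ)} {M : Type*} [L.Structure M]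

theorem IsHenkinComplete.realize_iff_mem (hD : IsHenkinComplete T D) {w : ℕ → M}
    (hw : ∀ φ ∈ D, φ.Realize w) (φ : L.Formula ℕ) : φ.Realize w ↔ φ ∈ D :=
  ⟨fun h => (hD.mem_or_not_mem φ).resolve_right fun hn => hw _ hn h, hw φ⟩

theorem exists_term_realize_eq {w : ℕ → M} {x : M}
    (hx : x ∈ Substructure.closure L (Set.range w)) : ∃ t : L.Term ℕ, t.realize w = x := by
  obtain ⟨t, rfl⟩ := Substructure.mem_closure_iff_exists_term.1 hx
  refine ⟨t.relabel fun y => Classical.choose y.2, ?_⟩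
  rw [Term.realize_relabel]
  congr 1
  exact funext fun y => Classical.choose_spec y.2

theorem IsHenkinComplete.isElementary_closure_range (hD : IsHenkinComplete T D) {w : ℕ → M}
    (hw : ∀ φ, φ.Realize w ↔ φ ∈ D) : (Substructure.closure L (Set.range w)).IsElementary := by
  refine Substructure.isElementary_of_exists _ fun n φ x a ha => ?_
  choose t ht using fun i => exists_term_realize_eq (x i).2
  have hx : (fun i => (t i).realize w) = Subtype.val ∘ x := funext ht
  obtain ⟨j, hj⟩ := hD.exists_instVar_mem _
    ((hw _).1 (realize_exVar.2 ⟨a, by rwa [realize_substInit, hx]⟩))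
  refine ⟨⟨w j, Substructure.subset_closure (Set.mem_range_self j)⟩, ?_⟩
  have := realize_instVar.1 ((hw _).2 hj)
  rwa [realize_substInit, hx] at this

theorem IsHenkinComplete.exists_model (hD : IsHenkinComplete T D) :
    ∃ M : Theory.ModelType.{u, v, max u v} T, ∀ (n : ℕ) (x : Fin n → M),
      ∃ t : Fin n → L.Term ℕ, ∀ γ : L.Formula (Fin n), γ.Realize x → γ.subst t ∈ D := by
  obtain ⟨N⟩ := hD.finitelyRealizable.isSatisfiable
  let _ : L.Structure N := Theory.ModelType.leftStructure N
  have : (L.lhomWithConstants ℕ).IsExpansionOn N := ⟨fun _ _ => rfl, fun _ _ => rfl⟩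
  have : N ⊨ T := (LHom.onTheory_model _ T).1 (N.is_model.mono Set.subset_union_left)
  have hw := hD.realize_iff_mem (w := fun j => (L.con j : N)) fun φ hφ =>
    (Formula.realize_equivSentence N φ).1
      (Theory.realize_sentence_of_mem _
        (Set.mem_union_right ((L.lhomWithConstants ℕ).onTheory T) (Set.mem_image_of_mem _ hφ)))
  let S : L.ElementarySubstructure N := ⟨_, hD.isElementary_closure_range hw⟩
  refine ⟨Theory.ModelType.of T S, fun n x => ?_⟩
  choose t ht using fun i => exists_term_realize_eq (x i).2
  refine ⟨t, fun γ hγ => (hw _).1 (BoundedFormula.realize_subst.2 ?_)⟩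
  rw [show (fun i => (t i).realize _) = _ from funext ht]
  exact (S.subtype.map_formula γ x).2 hγ

end HenkinModel

section Tree

structure Enumeration (L : FirstOrder.Language.{u, v}) where
  formula : ℕ → L.Formula ℕ
  witness : ℕ → L.Formula (ℕ ⊕ Fin 1)
  tuple : ℕ → Σ n, Fin n → L.Term ℕ
  surjective_formula : Function.Surjective formula
  surjective_witness : Function.Surjective witness
  surjective_tuple : Function.Surjective tuple

theorem Enumeration.nonempty [Countable L.Symbols] : Nonempty (Enumeration L) := by
  have : Nonempty (Σ n, Fin n → L.Term ℕ) := ⟨⟨0, Fin.elim0⟩⟩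
  obtain ⟨φ, hφ⟩ := exists_surjective_nat (L.Formula ℕ)
  obtain ⟨χ, hχ⟩ := exists_surjective_nat (L.Formula (ℕ ⊕ Fin 1))
  obtain ⟨t, ht⟩ := exists_surjective_nat (Σ n, Fin n → L.Term ℕ)
  exact ⟨⟨φ, χ, t, hφ, hχ, ht⟩⟩

variable (T : L.Theory) (E : Enumeration L)

noncomputable def splitUpTo (Θ : Finset (L.Formula ℕ)) :
    ℕ → Finset (L.Formula ℕ) × Finset (L.Formula ℕ)
  | 0 => (Θ, Θ)
  | m + 1 => splitStep T (E.tuple m) (splitUpTo Θ m)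

/-- The child of `Θ` at level `k` on the side `b`, taken by the branches `f` with `f k = b`. -/
noncomputable def child (k : ℕ) (Θ : Finset (L.Formula ℕ)) (b : Bool) : Finset (L.Formula ℕ) :=
  henkinStep T (E.witness k) (decideStep T (E.formula k)
    (cond b (splitUpTo T E Θ (k + 1)).2 (splitUpTo T E Θ (k + 1)).1))

noncomputable def node (f : ℕ → Bool) : ℕ → Finset (L.Formula ℕ)
  | 0 => ∅
  | k + 1 => child T E k (node f k) (f k)

def branch (f : ℕ → Bool) : Set (L.Formula ℕ) :=
  ⋃ k, ↑(node T E f k)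

variable {T E}

theorem monotone_splitUpTo (Θ : Finset (L.Formula ℕ)) : Monotone (splitUpTo T E Θ) :=
  monotone_nat_of_le_succ fun _ => le_splitStep _ _

theorem realizable_splitUpTo {Θ : Finset (L.Formula ℕ)} (hΘ : Realizable T Θ) (m : ℕ) :
    Realizable T (splitUpTo T E Θ m).1 ∧ Realizable T (splitUpTo T E Θ m).2 := by
  induction m with
  | zero => exact ⟨hΘ, hΘ⟩
  | succ m ih => exact realizable_splitStep _ ih.1 ih.2

theorem cond_splitUpTo_subset_child {k m : ℕ} (hm : m ≤ k + 1) (Θ : Finset (L.Formula ℕ))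
    (b : Bool) : cond b (splitUpTo T E Θ m).2 (splitUpTo T E Θ m).1 ⊆ child T E k Θ b := by
  have h := monotone_splitUpTo (T := T) (E := E) Θ hm
  refine subset_trans ?_ ((subset_decideStep _ _).trans (subset_henkinStep _ _))
  cases b
  exacts [h.1, h.2]

theorem subset_child (k : ℕ) (Θ : Finset (L.Formula ℕ)) (b : Bool) : Θ ⊆ child T E k Θ b := by
  simpa [splitUpTo] using cond_splitUpTo_subset_child (T := T) (E := E) (Nat.zero_le _) Θ b

theorem realizable_child (k : ℕ) {Θ : Finset (L.Formula ℕ)} (hΘ : Realizable T Θ) (b : Bool) :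
    Realizable T (child T E k Θ b) := by
  have h := realizable_splitUpTo (E := E) hΘ (k + 1)
  refine realizable_henkinStep _ (realizable_decideStep _ ?_)
  cases b
  exacts [h.1, h.2]

theorem monotone_node (f : ℕ → Bool) : Monotone (node T E f) :=
  monotone_nat_of_le_succ fun k => subset_child k _ (f k)

theorem realizable_node (hT : T.IsSatisfiable) (f : ℕ → Bool) (k : ℕ) :
    Realizable T (node T E f k) := by
  induction k with
  | zero => exact realizable_empty hT
  | succ k ih => exact realizable_child k ih (f k)

theorem node_congr {f g : ℕ → Bool} {k : ℕ} (h : ∀ j < k, f j = g j) :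
    node T E f k = node T E g k := by
  induction k with
  | zero => rfl
  | succ k ih =>
    change child T E k _ _ = child T E k _ _
    rw [ih fun j hj => h j (by omega), h k (by omega)]

theorem node_subset_branch (f : ℕ → Bool) (k : ℕ) : ↑(node T E f k) ⊆ branch T E f :=
  Set.subset_iUnion (fun k => (node T E f k : Set (L.Formula ℕ))) k

theorem finitelyRealizable_branch (hT : T.IsSatisfiable) (f : ℕ → Bool) :
    FinitelyRealizable T (branch T E f) := fun s hs => by
  have hmono : Monotone fun k => (node T E f k : Set (L.Formula ℕ)) :=
    fun _ _ h => Finset.coe_subset.2 (monotone_node f h)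
  obtain ⟨k, hk⟩ := hmono.directed_le.exists_mem_subset_of_finset_subset_biUnion hs
  exact (realizable_node hT f k).mono (Finset.coe_subset.1 hk)

theorem isHenkinComplete_branch (hT : T.IsSatisfiable) (f : ℕ → Bool) :
    IsHenkinComplete T (branch T E f) where
  finitelyRealizable := finitelyRealizable_branch hT f
  mem_or_not_mem φ := by
    obtain ⟨k, rfl⟩ := E.surjective_formula φ
    exact (mem_decideStep _ _).imp (fun h => node_subset_branch f (k + 1) (subset_henkinStep _ _ h))
      (fun h => node_subset_branch f (k + 1) (subset_henkinStep _ _ h))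
  exists_instVar_mem χ hχ := by
    obtain ⟨k, rfl⟩ := E.surjective_witness χ
    have hc := (Finset.coe_subset.2 (subset_henkinStep (T := T) _ _)).trans
      (node_subset_branch (E := E) f (k + 1))
    obtain ⟨j, hj⟩ := exists_instVar_mem_henkinStep
      ((finitelyRealizable_branch hT f).realizable_insert hc hχ)
    exact ⟨j, node_subset_branch f (k + 1) hj⟩

end Tree

section Separation

variable {T : L.Theory}

theorem not_forall_subst_mem_of_splitStep_subset {P Q : Set (L.Formula ℕ)}
    (hP : FinitelyRealizable T P) (hQ : FinitelyRealizable T Q) {n : ℕ} {t : Fin n → L.Term ℕ}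
    {Γ : Set (L.Formula (Fin n))} (hΓc : ∀ ψ, ψ ∈ Γ ∨ ψ.not ∈ Γ) (hΓ : NonPrincipal T Γ)
    {pq : Finset (L.Formula ℕ) × Finset (L.Formula ℕ)} (hp : ↑(splitStep T ⟨n, t⟩ pq).1 ⊆ P)
    (hq : ↑(splitStep T ⟨n, t⟩ pq).2 ⊆ Q) (hΓP : ∀ γ ∈ Γ, γ.subst t ∈ P) :
    ¬ ∀ γ ∈ Γ, γ.subst t ∈ Q := by
  intro hΓQ
  have hle := le_splitStep (T := T) ⟨n, t⟩ pq
  -- non-principality makes the split at `t̄` always possible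
  have hsplit : ∃ γ : L.Formula (Fin n), Realizable T (insert (γ.subst t) pq.1) ∧
      Realizable T (insert (γ.subst t).not pq.2) := by
    obtain ⟨γ, hγ, hγq⟩ :=
      hΓ.exists_realizable_insert_not (hQ _ ((Finset.coe_subset.2 hle.2).trans hq)) t
    exact ⟨γ, hP.realizable_insert ((Finset.coe_subset.2 hle.1).trans hp) (hΓP γ hγ), hγq⟩
  rw [splitStep, dif_pos hsplit] at hp hq
  rcases hΓc (Classical.choose hsplit) with hγ | hγ
  · exact hQ.not_notMem_of_mem (hΓQ _ hγ) (hq (Finset.mem_insert_self _ _))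
  · exact hP.not_notMem_of_mem (hp (Finset.mem_insert_self _ _)) (hΓP _ hγ)

variable {E : Enumeration L}

theorem cond_splitStep_subset_branch {f : ℕ → Bool} {k m : ℕ} (hm : m ≤ k) :
    ↑(cond (f k) (splitStep T (E.tuple m) (splitUpTo T E (node T E f k) m)).2
      (splitStep T (E.tuple m) (splitUpTo T E (node T E f k) m)).1) ⊆ branch T E f :=
  (Finset.coe_subset.2 (cond_splitUpTo_subset_child (Nat.succ_le_succ hm) _ _)).trans
    (node_subset_branch f (k + 1))

theorem eq_of_forall_lt_eq_of_subst_mem_branch (hT : T.IsSatisfiable) {f g : ℕ → Bool}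
    {k m : ℕ} (hm : m ≤ k) (hfg : ∀ j < k, f j = g j) {n : ℕ} {t : Fin n → L.Term ℕ}
    (ht : E.tuple m = ⟨n, t⟩) {Γ : Set (L.Formula (Fin n))} (hΓc : ∀ ψ, ψ ∈ Γ ∨ ψ.not ∈ Γ)
    (hΓ : NonPrincipal T Γ) (hf : ∀ γ ∈ Γ, γ.subst t ∈ branch T E f)
    (hg : ∀ γ ∈ Γ, γ.subst t ∈ branch T E g) : f k = g k := by
  have hf' := cond_splitStep_subset_branch (T := T) (E := E) (f := f) hm
  have hg' := cond_splitStep_subset_branch (T := T) (E := E) (f := g) hm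
  rw [← node_congr hfg] at hg'
  rw [ht] at hf' hg'
  have hPf := finitelyRealizable_branch (E := E) hT f
  have hPg := finitelyRealizable_branch (E := E) hT g
  cases hfk : f k <;> cases hgk : g k <;> simp only [hfk, hgk, cond_false, cond_true] at hf' hg' ⊢
  · exact absurd hg (not_forall_subst_mem_of_splitStep_subset hPf hPg hΓc hΓ hf' hg' hf)
  · exact absurd hf (not_forall_subst_mem_of_splitStep_subset hPg hPf hΓc hΓ hg' hf' hg)

/-- A branch through a complete non-principal type at `t̄ = E.tuple m` is determined by its first
`m` values. -/
theorem finite_setOf_forall_subst_mem_branch (hT : T.IsSatisfiable) {n : ℕ}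
    (t : Fin n → L.Term ℕ) {Γ : Set (L.Formula (Fin n))} (hΓc : ∀ ψ, ψ ∈ Γ ∨ ψ.not ∈ Γ)
    (hΓ : NonPrincipal T Γ) : {f : ℕ → Bool | ∀ γ ∈ Γ, γ.subst t ∈ branch T E f}.Finite := by
  obtain ⟨m, hm⟩ := E.surjective_tuple ⟨n, t⟩
  refine Set.Finite.of_finite_image (f := fun f (j : Fin m) => f j) (Set.toFinite _) ?_
  intro f hf g hg hfg
  funext k
  induction k using Nat.strong_induction_on with
  | _ k ih =>
    rcases lt_or_ge k m with hk | hk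
    · exact congrFun hfg ⟨k, hk⟩
    · exact eq_of_forall_lt_eq_of_subst_mem_branch hT hk ih hm hΓc hΓ hf hg

end Separation

open Cardinal in
theorem exists_forall_notMem_of_finite {κ : Type} (hκ : #κ < 2 ^ ℵ₀) (S : κ → Set (ℕ → Bool))
    (hS : ∀ i, (S i).Finite) : ∃ f, ∀ i, f ∉ S i := by
  have hlt : #(⋃ i, S i) < #(ℕ → Bool) :=
    calc #(⋃ i, S i) ≤ sum fun i => #(S i) := mk_iUnion_le_sum_mk
      _ ≤ sum fun _ : κ => ℵ₀ := sum_le_sum _ _ fun i => (hS i).lt_aleph0.le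
      _ = #κ * ℵ₀ := sum_const' _ _
      _ < 2 ^ ℵ₀ := mul_lt_of_lt (cantor ℵ₀).le hκ (cantor ℵ₀)
      _ = #(ℕ → Bool) := by simp
  by_contra! h
  rw [Set.eq_univ_of_forall fun f => Set.mem_iUnion.2 (h f), mk_univ] at hlt
  exact lt_irrefl _ hlt

end OmittingTypes

open OmittingTypes in
/-- When the non-principal types to be omitted are maximal (complete), any family of
fewer than `2^ℵ₀` of them can be omitted in a model of a consistent theory in a
countable language. -/
theorem omitting_complete_types_below_continuum {L : FirstOrder.Language.{u, v}}
    (hL : L.card ≤ Cardinal.aleph0)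
    (T : L.Theory) (hT : T.IsSatisfiable)
    (ι : Type) (hι : Cardinal.mk ι < 2 ^ Cardinal.aleph0)
    (n : ι → ℕ) (Γ : (i : ι) → Set (L.Formula (Fin (n i))))
    (hΓ : ∀ i, NonPrincipal T (Γ i)) (hΓc : ∀ i, IsCompleteType T (Γ i)) :
    ∃ M : Theory.ModelType.{u, v, max u v} T,
      ∀ i, ¬ ∃ v : Fin (n i) → M, ∀ γ ∈ Γ i, γ.Realize v := by
  have : Countable L.Symbols := Cardinal.mk_le_aleph0_iff.1 hL
  obtain ⟨E⟩ := Enumeration.nonempty (L := L)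
  choose σ hσ using fun i => exists_surjective_nat (Fin (n i) → L.Term ℕ)
  have hκ : Cardinal.mk (ι × ℕ) < 2 ^ Cardinal.aleph0 := by
    simpa using Cardinal.mul_lt_of_lt (Cardinal.cantor _).le hι (Cardinal.cantor _)
  obtain ⟨f, hf⟩ := exists_forall_notMem_of_finite hκ
    (fun z : ι × ℕ => {f | ∀ γ ∈ Γ z.1, γ.subst (σ z.1 z.2) ∈ branch T E f})
    fun z => finite_setOf_forall_subst_mem_branch hT _ (hΓc z.1).2 (hΓ z.1)
  obtain ⟨M, hM⟩ := (isHenkinComplete_branch (E := E) hT f).exists_model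
  refine ⟨M, fun i ⟨x, hx⟩ => ?_⟩
  obtain ⟨t, ht⟩ := hM (n i) x
  obtain ⟨m, rfl⟩ := hσ i t
  exact hf (i, m) fun γ hγ => ht γ (hx γ hγ)
end

section
/- Let T be a consistent theory in a countable first-order language. Then there exists a family (M_i : i < 2^ℵ₀) of countable models of T such that for all i ≠ j, all n ∈ ℕ, and all tuples ā ∈ (M_i)ⁿ and b̄ ∈ (M_j)ⁿ: if ā and b̄ satisfy exactly the same formulas in n free variables (in M_i and M_j respectively), then the set of formulas they satisfy is a principal type over T. That is, there are continuum many countable models of T that overlap only on principal types. -/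
open FirstOrder FirstOrder.Language

universe u v

/-- A set `Γ` of formulas in the free variables `x₀,…,x_{n−1}` is principal over `T`
if there is a formula `φ` consistent with `T` such that in every model of `T` every
`n`-tuple satisfying `φ` satisfies every member of `Γ`. -/
def Principal {L : FirstOrder.Language.{u, v}} (T : L.Theory) {n : ℕ}
    (Γ : Set (L.Formula (Fin n))) : Prop :=
  ∃ φ : L.Formula (Fin n), ConsistentWith T φ ∧
    ∀ (M : Theory.ModelType.{u, v, max u v} T) (v : Fin n → M),
      φ.Realize v → ∀ γ ∈ Γ, Formula.Realize γ v

/-!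
The models are indexed by the branches `η : ℕ → Bool` of the binary tree. Their elements are
named by constants, realized as the free variables `i : ℕ` of formulas in `L.Formula ℕ`. Every
node of depth `n` carries a finite set of such formulas realizable in a model of `T`, growing
along each branch; Henkin axioms make the range of the constants in a model of the union along a
branch an elementary substructure, so every tuple of that countable model is a tuple of constants.

At each level, a pair of tuples of constants `c_e, c_d` is offered to every pair of distinct nodes
`x ≠ y`: if some `χ` can be added consistently as `χ(c_e)` above `x` and as `¬χ(c_d)` above `y`,
it is. Suppose `c_e` in the model of `η` and `c_d` in the model of `ν ≠ η` have the same type.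
Then the attempt failed at a level where `η` and `ν` have already split, and the formulas `p`
reached there on `η` isolate the type of `c_e`: were `∃ ȳ (p(ȳ) ∧ ȳ_e = x̄) ∧ ¬γ(x̄)` consistent
with `T`, then `γ` would have separated the two tuples.
-/

namespace ContinuumManyModels

variable {L : FirstOrder.Language.{u, v}}

theorem countable_boundedFormula (hL : L.card ≤ Cardinal.aleph0) {α : Type*} [Countable α]
    (n : ℕ) : Countable (L.BoundedFormula α n) := by
  have : Countable (Σ n, L.BoundedFormula α n) := by
    refine Cardinal.mk_le_aleph0_iff.1 (BoundedFormula.card_le.trans (max_le le_rfl ?_))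
    exact Cardinal.add_le_aleph0.2
      ⟨Cardinal.lift_le_aleph0.2 Cardinal.mk_le_aleph0, Cardinal.lift_le_aleph0.2 hL⟩
  exact sigma_mk_injective.countable

section Henkin

variable {M : Type*} [L.Structure M] {α : Type*}

theorem realize_iff_of_eqOn_freeVarFinset [DecidableEq α] {n : ℕ} {φ : L.BoundedFormula α n}
    {x y : α → M} {xs : Fin n → M} (h : Set.EqOn x y φ.freeVarFinset) :
    φ.Realize x xs ↔ φ.Realize y xs :=
  (BoundedFormula.realize_restrictFreeVar (f := Subtype.val) x fun _ => rfl).symm.trans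
    (BoundedFormula.realize_restrictFreeVar y fun i => h i.2)

def henkinAxiom (θ : L.BoundedFormula α 1) (c : α) : L.Formula α :=
  θ.ex.imp (θ.toFormula.relabel (Sum.elim id fun _ => c))

theorem realize_henkinAxiom {θ : L.BoundedFormula α 1} {c : α} {x : α → M} :
    (henkinAxiom θ c).Realize x ↔
      ((∃ a, θ.Realize x fun _ => a) → θ.Realize x fun _ => x c) := by
  have hsnoc (a : M) : (Fin.snoc (default : Fin 0 → M) a : Fin 1 → M) = fun _ => a := by
    funext i; exact Fin.lastCases (Fin.snoc_last _ _) (fun j => j.elim0) i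
  rw [henkinAxiom, Formula.realize_imp, Formula.realize_relabel,
    BoundedFormula.realize_toFormula, Formula.Realize, BoundedFormula.realize_ex]
  simp only [hsnoc]
  rfl

variable (L) in
def IsHenkin (x : α → M) : Prop :=
  ∀ θ : L.BoundedFormula α 1, (∃ a, θ.Realize x fun _ => a) → ∃ c, θ.Realize x fun _ => x c

variable {x : α → M}

theorem IsHenkin.funMap_mem_range (hx : IsHenkin L x) {k : ℕ} (f : L.Functions k)
    (e : Fin k → α) : Structure.funMap f (x ∘ e) ∈ Set.range x := by
  let θ : L.BoundedFormula α 1 :=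
    Term.bdEqual (Term.func f fun j => Term.var (Sum.inl (e j))) (Term.var (Sum.inr 0))
  have hθ (b : M) : θ.Realize x (fun _ => b) ↔ Structure.funMap f (x ∘ e) = b := by
    simp [θ, Function.comp_def]
  obtain ⟨c, hc⟩ := hx θ ⟨_, (hθ _).2 rfl⟩
  exact ⟨c, ((hθ _).1 hc).symm⟩

def IsHenkin.substructure (hx : IsHenkin L x) : L.Substructure M where
  carrier := Set.range x
  fun_mem {k} f y hy := by
    choose e he using hy
    rw [show y = x ∘ e from funext fun j => (he j).symm]
    exact hx.funMap_mem_range f e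

theorem IsHenkin.substructure_isElementary (hx : IsHenkin L x) :
    hx.substructure.IsElementary := by
  refine Substructure.isElementary_of_exists _ fun n φ y a ha => ?_
  choose e he using fun i => (y i).2
  have hy : ((↑) ∘ y : Fin n → M) = x ∘ e := funext fun i => (he i).symm
  let g : Empty ⊕ Fin (n + 1) → α ⊕ Fin 1 :=
    Sum.elim Empty.elim (Fin.snoc (fun i => Sum.inl (e i)) (Sum.inr 0))
  have hθ (b : M) : (BoundedFormula.relabel g φ.toFormula).Realize x (fun _ => b) ↔
      φ.Realize default (Fin.snoc ((↑) ∘ y) b : _ → M) := by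
    rw [BoundedFormula.realize_relabel, Subsingleton.elim (_ ∘ Fin.natAdd 1) default]
    change φ.toFormula.Realize _ ↔ _
    rw [BoundedFormula.realize_toFormula, Subsingleton.elim (_ ∘ Sum.inl) default]
    rw [hy, Function.comp_assoc, Sum.elim_comp_inr, Fin.comp_snoc]
    rfl
  obtain ⟨c, hc⟩ := hx _ ⟨a, (hθ a).2 ha⟩
  exact ⟨⟨x c, c, rfl⟩, (hθ (x c)).1 hc⟩

end Henkin

section Realizability

variable (T : L.Theory)

def IsRealizable {α : Type} (Γ : Set (L.Formula α)) : Prop :=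
  ∃ (M : Theory.ModelType.{u, v, max u v} T) (x : α → M), ∀ φ ∈ Γ, φ.Realize x

variable {T}

theorem IsRealizable.of_finset {α : Type} {Γ : Set (L.Formula α)}
    (h : ∀ s : Finset (L.Formula α), ↑s ⊆ Γ → IsRealizable T (s : Set (L.Formula α))) :
    IsRealizable T Γ := by
  classical
  let Γ' : L[[α]].Theory :=
    (L.lhomWithConstants α).onTheory T ∪ Formula.equivSentence.symm ⁻¹' Γ
  obtain ⟨N⟩ : Γ'.IsSatisfiable := by
    refine Theory.isSatisfiable_iff_isFinitelySatisfiable.2 fun s hs => ?_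
    obtain ⟨M, x, hx⟩ := h ((s.filter (Formula.equivSentence.symm · ∈ Γ)).image
      Formula.equivSentence.symm) (by simp [Set.subset_def])
    let := constantsOn.structure x
    have : (M : Type (max u v)) ⊨ (s : L[[α]].Theory) := by
      refine (Theory.model_iff _).2 fun σ hσ => ?_
      rcases hs hσ with ⟨ψ, hψ, rfl⟩ | hσΓ
      · exact (LHom.realize_onSentence _ _ _).2 (Theory.realize_sentence_of_mem T hψ)
      · exact (Formula.realize_equivSentence_symm M σ x).1
          (hx _ (Finset.mem_image_of_mem _ (Finset.mem_filter.2 ⟨hσ, hσΓ⟩)))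
    exact Theory.Model.isSatisfiable M
  let : L.Structure N := (L.lhomWithConstants α).reduct N
  have := LHom.isExpansionOn_reduct (L.lhomWithConstants α) N
  have : N ⊨ T := (LHom.onTheory_model _ T).1 (N.is_model.mono Set.subset_union_left)
  refine ⟨Theory.ModelType.of T N, fun a => (L.con a : N), fun φ hφ => ?_⟩
  refine (Formula.realize_equivSentence N φ).1 (Theory.realize_sentence_of_mem Γ' ?_)
  exact Set.mem_union_right _ (by simpa using hφ)

theorem IsRealizable.mono {α : Type} {Γ Δ : Set (L.Formula α)} (hΓ : IsRealizable T Γ)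
    (hΔ : Δ ⊆ Γ) : IsRealizable T Δ :=
  let ⟨M, x, hx⟩ := hΓ
  ⟨M, x, fun φ hφ => hx φ (hΔ hφ)⟩

theorem IsRealizable.insert_henkinAxiom {α : Type} [DecidableEq α] {Γ : Set (L.Formula α)}
    (hΓ : IsRealizable T Γ) (θ : L.BoundedFormula α 1) {c : α}
    (hΓc : ∀ φ ∈ Γ, c ∉ φ.freeVarFinset) (hθc : c ∉ θ.freeVarFinset) :
    IsRealizable T (insert (henkinAxiom θ c) Γ) := by
  obtain ⟨M, x, hx⟩ := hΓ
  by_cases hθ : ∃ a, θ.Realize x fun _ => a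
  · obtain ⟨a, ha⟩ := hθ
    have hupd {s : Finset α} (hc : c ∉ s) : Set.EqOn x (Function.update x c a) s :=
      fun i hi => (Function.update_of_ne (ne_of_mem_of_not_mem hi hc) a x).symm
    refine ⟨M, Function.update x c a, Set.forall_mem_insert.2 ⟨?_, fun φ hφ =>
      (realize_iff_of_eqOn_freeVarFinset (hupd (hΓc φ hφ))).1 (hx φ hφ)⟩⟩
    refine realize_henkinAxiom.2 fun _ => ?_
    rw [Function.update_self]
    exact (realize_iff_of_eqOn_freeVarFinset (hupd hθc)).1 ha
  · exact ⟨M, x, Set.forall_mem_insert.2 ⟨realize_henkinAxiom.2 fun h => absurd h hθ, hx⟩⟩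

theorem IsRealizable.exists_surjective_of_henkin {α : Type} {Γ : Set (L.Formula α)}
    (hΓ : IsRealizable T Γ) (hhenkin : ∀ θ : L.BoundedFormula α 1, ∃ c, henkinAxiom θ c ∈ Γ) :
    ∃ (M : Theory.ModelType.{u, v, max u v} T) (x : α → M),
      Function.Surjective x ∧ ∀ φ ∈ Γ, φ.Realize x := by
  obtain ⟨N, x, hx⟩ := hΓ
  have hH : IsHenkin L x := fun θ hθ =>
    let ⟨c, hc⟩ := hhenkin θ
    ⟨c, realize_henkinAxiom.1 (hx _ hc) hθ⟩
  let S : L.ElementarySubstructure N := ⟨hH.substructure, hH.substructure_isElementary⟩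
  let y : α → S := fun i => ⟨x i, i, rfl⟩
  refine ⟨Theory.ModelType.of T S, y, ?_, fun φ hφ => (S.subtype.map_formula φ y).1 (hx φ hφ)⟩
  rintro ⟨_, i, rfl⟩
  exact ⟨i, rfl⟩

end Realizability

section Projection

variable {α : Type*} [DecidableEq α] {m : ℕ}

noncomputable def projection (p : Finset (L.Formula α)) (e : Fin m → α) : L.Formula (Fin m) :=
  let K : Finset α := p.biUnion (·.freeVarFinset) ∪ Finset.univ.image e
  Formula.iExs K
    ((Formula.iInf fun k : Fin m =>
        Term.equal (Term.var (Sum.inl k)) (Term.var (Sum.inr ⟨e k, by simp [K]⟩))) ⊓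
      Formula.iInf fun φ : p =>
        φ.1.restrictFreeVar fun i => Sum.inr ⟨i, by simpa [K] using Or.inl ⟨φ, φ.2, i.2⟩⟩)

theorem realize_projection {M : Type*} [L.Structure M] [Nonempty M] {p : Finset (L.Formula α)}
    {e : Fin m → α} {w : Fin m → M} :
    (projection p e).Realize w ↔ ∃ x : α → M, x ∘ e = w ∧ ∀ φ ∈ p, φ.Realize x := by
  simp only [projection, Formula.realize_iExs, Formula.realize_inf, Formula.realize_iInf,
    Formula.realize_equal, Term.realize_var, Sum.elim_inl, Sum.elim_inr]
  constructor
  · rintro ⟨z, hze, hzp⟩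
    classical
    let x (i : α) : M := if h : _ then z ⟨i, h⟩ else Classical.arbitrary M
    refine ⟨x, funext fun k => by simp [x, hze], fun φ hφ => ?_⟩
    refine (BoundedFormula.realize_restrictFreeVar x fun i => ?_).1 (hzp ⟨φ, hφ⟩)
    have hi : (i : α) ∈ p.biUnion (·.freeVarFinset) := Finset.mem_biUnion.2 ⟨φ, hφ, i.2⟩
    simp only [Sum.elim_inr, x, dif_pos (Finset.mem_union_left _ hi)]
  · rintro ⟨x, rfl, hx⟩
    refine ⟨fun i => x i, fun k => rfl, fun φ => ?_⟩
    apply (BoundedFormula.realize_restrictFreeVar x ?_).2 (hx φ φ.2)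
    exact fun _ => rfl

end Projection

section Separation

variable (T : L.Theory)

def Separable {α : Type} {m : ℕ} (p q : Set (L.Formula α)) (e d : Fin m → α) : Prop :=
  ∃ χ : L.Formula (Fin m), IsRealizable T (insert (χ.relabel e) p) ∧
    IsRealizable T (insert (χ.not.relabel d) q)

variable {T}

theorem Separable.mono {α : Type} {m : ℕ} {e d : Fin m → α} {p p' q q' : Set (L.Formula α)}
    (h : Separable T p' q' e d) (hp : p ⊆ p') (hq : q ⊆ q') : Separable T p q e d :=
  let ⟨χ, hχp, hχq⟩ := h
  ⟨χ, hχp.mono (Set.insert_subset_insert hp), hχq.mono (Set.insert_subset_insert hq)⟩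

theorem principal_of_not_separable {α : Type} [DecidableEq α] {m : ℕ} {e d : Fin m → α}
    {p : Finset (L.Formula α)} {q : Set (L.Formula α)} (hpq : ¬Separable T (p : Set _) q e d)
    {M N : Theory.ModelType.{u, v, max u v} T} {x : α → M} {y : α → N}
    (hx : ∀ φ ∈ p, φ.Realize x) (hy : ∀ φ ∈ q, φ.Realize y)
    (hxy : ∀ χ : L.Formula (Fin m), χ.Realize (x ∘ e) ↔ χ.Realize (y ∘ d)) :
    Principal T {χ : L.Formula (Fin m) | χ.Realize (x ∘ e)} := by
  refine ⟨projection p e, ⟨M, x ∘ e, realize_projection.2 ⟨x, rfl, hx⟩⟩,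
    fun M' w hw γ hγ => ?_⟩
  obtain ⟨x', rfl, hx'⟩ := realize_projection.1 hw
  by_contra hγ'
  refine hpq ⟨γ.not, ⟨M', x', Set.forall_mem_insert.2 ⟨?_, hx'⟩⟩,
    ⟨N, y, Set.forall_mem_insert.2 ⟨?_, hy⟩⟩⟩
  · simpa [Formula.realize_relabel] using hγ'
  · simpa [Formula.realize_relabel, ← hxy] using hγ

end Separation

section Construction

open scoped Classical

variable (T : L.Theory) {n m : ℕ} (e d : Fin m → ℕ)

noncomputable def separateAt (C : (Fin n → Bool) → Finset (L.Formula ℕ))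
    (xy : (Fin n → Bool) × (Fin n → Bool)) : (Fin n → Bool) → Finset (L.Formula ℕ) :=
  if h : Separable T (C xy.1 : Set (L.Formula ℕ)) (C xy.2) e d then
    Function.update (Function.update C xy.1 (insert (h.choose.relabel e) (C xy.1)))
      xy.2 (insert (h.choose.not.relabel d) (C xy.2))
  else C

variable {T e d}

theorem subset_separateAt (C : (Fin n → Bool) → Finset (L.Formula ℕ))
    (xy : (Fin n → Bool) × (Fin n → Bool)) (s : Fin n → Bool) :
    C s ⊆ separateAt T e d C xy s := by
  unfold separateAt
  split_ifs with h
  · simp only [Function.update_apply]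
    split_ifs with h₂ h₁ <;> subst_vars <;> simp
  · rfl

theorem isRealizable_separateAt {C : (Fin n → Bool) → Finset (L.Formula ℕ)}
    (hC : ∀ s, IsRealizable T (C s : Set (L.Formula ℕ))) (xy : (Fin n → Bool) × (Fin n → Bool))
    (s : Fin n → Bool) : IsRealizable T (separateAt T e d C xy s : Set (L.Formula ℕ)) := by
  unfold separateAt
  split_ifs with h
  · simp only [Function.update_apply]
    split_ifs with h₂ h₁
    · simpa [h₂] using h.choose_spec.2
    · simpa [h₁] using h.choose_spec.1
    · exact hC s
  · exact hC s

theorem subset_foldl_separateAt (l : List ((Fin n → Bool) × (Fin n → Bool)))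
    (C : (Fin n → Bool) → Finset (L.Formula ℕ)) (s : Fin n → Bool) :
    C s ⊆ l.foldl (separateAt T e d) C s := by
  induction l generalizing C with
  | nil => exact subset_rfl
  | cons xy l ih => exact (subset_separateAt C xy s).trans (ih _)

theorem isRealizable_foldl_separateAt (l : List ((Fin n → Bool) × (Fin n → Bool)))
    {C : (Fin n → Bool) → Finset (L.Formula ℕ)}
    (hC : ∀ s, IsRealizable T (C s : Set (L.Formula ℕ))) (s : Fin n → Bool) :
    IsRealizable T (l.foldl (separateAt T e d) C s : Set (L.Formula ℕ)) := by
  induction l generalizing C with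
  | nil => exact hC s
  | cons xy l ih => exact ih (isRealizable_separateAt hC xy)

theorem separates_or_not_separable_foldl_separateAt {l : List ((Fin n → Bool) × (Fin n → Bool))}
    {xy : (Fin n → Bool) × (Fin n → Bool)} (hxy : xy ∈ l) (hne : xy.1 ≠ xy.2)
    (C : (Fin n → Bool) → Finset (L.Formula ℕ)) :
    (∃ χ : L.Formula (Fin m), χ.relabel e ∈ l.foldl (separateAt T e d) C xy.1 ∧
      χ.not.relabel d ∈ l.foldl (separateAt T e d) C xy.2) ∨
    ¬Separable T (l.foldl (separateAt T e d) C xy.1 : Set (L.Formula ℕ))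
      (l.foldl (separateAt T e d) C xy.2) e d := by
  obtain ⟨l₁, l₂, rfl⟩ := List.append_of_mem hxy
  rw [List.foldl_append, List.foldl_cons]
  set C₁ := l₁.foldl (separateAt T e d) C
  by_cases h : Separable T (C₁ xy.1 : Set (L.Formula ℕ)) (C₁ xy.2) e d
  · refine .inl ⟨h.choose, subset_foldl_separateAt _ _ _ ?_, subset_foldl_separateAt _ _ _ ?_⟩
    · simp [separateAt, h, hne]
    · simp [separateAt, h]
  · refine .inr fun h' => h (h'.mono ?_ ?_) <;>
      exact Finset.coe_subset.2 ((subset_separateAt _ _ _).trans (subset_foldl_separateAt _ _ _))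

noncomputable def addHenkinAxiom (θ : L.BoundedFormula ℕ 1) (p : Finset (L.Formula ℕ)) :
    Finset (L.Formula ℕ) :=
  insert (henkinAxiom θ
    (Infinite.exists_notMem_finset (p.biUnion (·.freeVarFinset) ∪ θ.freeVarFinset)).choose) p

theorem isRealizable_addHenkinAxiom {p : Finset (L.Formula ℕ)}
    (hp : IsRealizable T (p : Set (L.Formula ℕ))) (θ : L.BoundedFormula ℕ 1) :
    IsRealizable T (addHenkinAxiom θ p : Set (L.Formula ℕ)) := by
  have hc := (Infinite.exists_notMem_finset
    (p.biUnion (·.freeVarFinset) ∪ θ.freeVarFinset)).choose_spec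
  simp only [Finset.mem_union, Finset.mem_biUnion, not_or, not_exists, not_and] at hc
  simpa [addHenkinAxiom] using hp.insert_henkinAxiom θ hc.1 hc.2

variable (T) (henkinEnum : ℕ → L.BoundedFormula ℕ 1)
  (taskEnum : ℕ → Σ m, (Fin m → ℕ) × (Fin m → ℕ))

-- Level `n` serves the task `taskEnum n.unpair.1`, so each task is served at infinitely many
-- levels, in particular at levels where two given branches have already split.
noncomputable def stage : (n : ℕ) → (Fin n → Bool) → Finset (L.Formula ℕ)
  | 0 => fun _ => ∅
  | n + 1 => fun s => addHenkinAxiom (henkinEnum n)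
      (Finset.univ.toList.foldl
        (separateAt T (taskEnum n.unpair.1).2.1 (taskEnum n.unpair.1).2.2) (stage n) (Fin.init s))

def branchTheory (η : ℕ → Bool) : Set (L.Formula ℕ) :=
  ⋃ n, (stage T henkinEnum taskEnum n fun i => η i : Set (L.Formula ℕ))

variable {T henkinEnum taskEnum}

theorem isRealizable_stage (hT : T.IsSatisfiable) :
    ∀ n s, IsRealizable T (stage T henkinEnum taskEnum n s : Set (L.Formula ℕ))
  | 0, _ =>
    let ⟨M⟩ := hT
    ⟨M, fun _ => Classical.arbitrary M, by simp [stage]⟩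
  | n + 1, s => isRealizable_addHenkinAxiom
      (isRealizable_foldl_separateAt _ (isRealizable_stage hT n) _) _

theorem monotone_stage (η : ℕ → Bool) :
    Monotone fun n => (stage T henkinEnum taskEnum n fun i => η i : Set (L.Formula ℕ)) :=
  monotone_nat_of_le_succ fun _ => Finset.coe_subset.2 <|
    (subset_foldl_separateAt _ _ _).trans (Finset.subset_insert _ _)

theorem isRealizable_branchTheory (hT : T.IsSatisfiable) (η : ℕ → Bool) :
    IsRealizable T (branchTheory T henkinEnum taskEnum η) :=
  IsRealizable.of_finset fun _ hs =>
    let ⟨n, hn⟩ := (monotone_stage η).directed_le.exists_mem_subset_of_finset_subset_biUnion hs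
    (isRealizable_stage hT n _).mono hn

theorem exists_henkinAxiom_mem_branchTheory (hsurj : Function.Surjective henkinEnum)
    (η : ℕ → Bool) (θ : L.BoundedFormula ℕ 1) :
    ∃ c, henkinAxiom θ c ∈ branchTheory T henkinEnum taskEnum η := by
  obtain ⟨n, rfl⟩ := hsurj θ
  exact ⟨_, Set.mem_iUnion.2 ⟨n + 1, Finset.mem_insert_self _ _⟩⟩

theorem separates_or_not_separable (htask : Function.Surjective taskEnum) {η ν : ℕ → Bool}
    (hne : η ≠ ν) {m : ℕ} (e d : Fin m → ℕ) :
    (∃ χ : L.Formula (Fin m), χ.relabel e ∈ branchTheory T henkinEnum taskEnum η ∧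
      χ.not.relabel d ∈ branchTheory T henkinEnum taskEnum ν) ∨
    ∃ p q : Finset (L.Formula ℕ), ↑p ⊆ branchTheory T henkinEnum taskEnum η ∧
      ↑q ⊆ branchTheory T henkinEnum taskEnum ν ∧ ¬Separable T (p : Set (L.Formula ℕ)) q e d := by
  obtain ⟨l, hl⟩ := Function.ne_iff.1 hne
  obtain ⟨j, hj⟩ := htask ⟨m, e, d⟩
  have hln : l < Nat.pair j (l + 1) := Nat.lt_of_succ_le (Nat.right_le_pair j (l + 1))
  have htask_n : taskEnum (Nat.pair j (l + 1)).unpair.1 = ⟨m, e, d⟩ := by rw [Nat.unpair_pair, hj]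
  set n := Nat.pair j (l + 1)
  have hstage (β : ℕ → Bool) : (Finset.univ.toList.foldl (separateAt T e d)
      (stage T henkinEnum taskEnum n) fun i => β i : Set (L.Formula ℕ)) ⊆
      branchTheory T henkinEnum taskEnum β := by
    refine subset_trans ?_ (Set.subset_iUnion _ (n + 1))
    rw [stage, htask_n]
    exact Finset.coe_subset.2 (Finset.subset_insert _ _)
  have hxy : (fun i : Fin n => η i) ≠ fun i : Fin n => ν i := fun h => hl (congrFun h ⟨l, hln⟩)
  rcases separates_or_not_separable_foldl_separateAt (e := e) (d := d)
    (Finset.mem_toList.2 (Finset.mem_univ (_, _))) hxy (stage T henkinEnum taskEnum n) with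
    ⟨χ, hη, hν⟩ | h
  · exact .inl ⟨χ, hstage η hη, hstage ν hν⟩
  · exact .inr ⟨_, _, hstage η, hstage ν, h⟩

end Construction

end ContinuumManyModels

open ContinuumManyModels

/-- (Shelah) A consistent theory in a countable language has `2^ℵ₀` many countable
models that overlap only on principal types: tuples from distinct models realizing
the same type only realize principal types. -/
theorem continuum_many_models_overlapping_on_principal_types
    {L : FirstOrder.Language.{u, v}} (hL : L.card ≤ Cardinal.aleph0)
    (T : L.Theory) (hT : T.IsSatisfiable) :
    ∃ (ι : Type) (M : ι → Theory.ModelType.{u, v, max u v} T),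
      Cardinal.mk ι = 2 ^ Cardinal.aleph0 ∧
      (∀ i, Countable (M i)) ∧
      ∀ i j, i ≠ j → ∀ (n : ℕ) (a : Fin n → M i) (b : Fin n → M j),
        (∀ φ : L.Formula (Fin n), φ.Realize a ↔ φ.Realize b) →
        Principal T {φ : L.Formula (Fin n) | φ.Realize a} := by
  have := countable_boundedFormula hL (α := ℕ) 1
  obtain ⟨henkinEnum, hhenkin⟩ := exists_surjective_nat (L.BoundedFormula ℕ 1)
  obtain ⟨taskEnum, htask⟩ := exists_surjective_nat (Σ m, (Fin m → ℕ) × (Fin m → ℕ))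
  choose M x hx_surj hx_real using fun η =>
    (isRealizable_branchTheory (henkinEnum := henkinEnum) (taskEnum := taskEnum) hT η
      ).exists_surjective_of_henkin (exists_henkinAxiom_mem_branchTheory hhenkin η)
  refine ⟨ℕ → Bool, M, by simp, fun η => (hx_surj η).countable, ?_⟩
  intro η ν hne n a b hab
  obtain ⟨e, rfl⟩ := (hx_surj η).comp_left a
  obtain ⟨d, rfl⟩ := (hx_surj ν).comp_left b
  rcases separates_or_not_separable htask hne e d with ⟨χ, hχη, hχν⟩ | ⟨p, q, hp, hq, hpq⟩
  · have hχ := hx_real η _ hχη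
    have hnχ := hx_real ν _ hχν
    simp only [Formula.realize_relabel, Formula.realize_not] at hχ hnχ
    exact absurd ((hab χ).1 hχ) hnχ
  · exact principal_of_not_separable hpq (fun φ hφ => hx_real η φ (hp hφ))
      (fun φ hφ => hx_real ν φ (hq hφ)) hab
end

section
/- (Erdős–Rado) Define exp_0(κ) = κ and exp_{r+1}(κ) = 2^{exp_r(κ)} for cardinals κ and natural numbers r. Then for every infinite cardinal κ and every natural number r, the partition relation (exp_r(κ))⁺ → (κ⁺)^{r+1}_κ holds: for every set S of cardinality at least (exp_r(κ))⁺, every set C of cardinality at most κ, and every coloring c of the (r+1)-element subsets of S by elements of C, there is a subset H ⊆ S of cardinality κ⁺ such that c is constant on the (r+1)-element subsets of H. -/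
/-!
Induction on `r`, the base case being the pigeonhole principle for the regular cardinal `κ⁺`.
For the step, put `μ = exp_r(κ)` and colour the `(r+2)`-sets of `S`, `#S > 2^μ`. Call `x, y`
of the same type over `B` if `insert x t` and `insert y t` get the same colour for every finite
`t ⊆ B`. There are at most `2^μ` types over a set of size `μ`, so a union of a chain of length
`μ⁺` gives a set `A` of size at most `2^μ` such that every type over a `μ`-small `B ⊆ A`
realized outside `B` is realized in `A \ B`. Picking `a ∉ A` and realizing, by transfinite
recursion, the type of `a` over all earlier choices yields an injective `f : μ⁺ → S` along which
the colour of a set depends only on the set minus its maximum. The induction hypothesis applied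
to the induced colouring `s ↦ c (insert a (f '' s))` on `μ⁺` gives the homogeneous set.
-/

/-- Iterated exponentiation of cardinals: `exp_0(κ) = κ`,
`exp_{r+1}(κ) = 2 ^ exp_r(κ)`. -/
noncomputable def expIter : ℕ → Cardinal → Cardinal
  | 0, κ => κ
  | r + 1, κ => 2 ^ expIter r κ

open Cardinal Set Order

namespace Cardinal

universe u

theorem mk_iUnion_le_of_le {α ι : Type u} {f : ι → Set α} {c : Cardinal} (hc : ℵ₀ ≤ c)
    (hι : #ι ≤ c) (hf : ∀ i, #(f i) ≤ c) : #(⋃ i, f i) ≤ c :=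
  calc #(⋃ i, f i) ≤ #ι * ⨆ i, #(f i) := mk_iUnion_le f
    _ ≤ c * c := mul_le_mul' hι (ciSup_le' hf)
    _ = c := mul_eq_self hc

theorem power_le_two_power {a b μ : Cardinal} (hμ : ℵ₀ ≤ μ) (ha : a ≤ 2 ^ μ) (hb : b ≤ μ) :
    a ^ b ≤ 2 ^ μ :=
  calc a ^ b ≤ (2 ^ μ) ^ μ :=
        (power_le_power_right ha).trans (power_le_power_left (power_ne_zero _ two_ne_zero) hb)
    _ = 2 ^ μ := by rw [← power_mul, mul_eq_self hμ]

theorem mk_finset_le_of_le {α : Type u} {μ : Cardinal} (hμ : ℵ₀ ≤ μ) (hα : #α ≤ μ) :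
    #(Finset α) ≤ μ := by
  classical
  exact (mk_le_of_surjective List.toFinset_surjective).trans
    ((mk_list_le_max α).trans (max_le hμ hα))

theorem mk_Iio_ord_succ_toType_le {μ : Cardinal} (w : (succ μ).ord.ToType) : #(Iio w) ≤ μ :=
  lt_succ_iff.mp (by simpa using mk_Iio_lt w)

theorem exists_forall_lt_of_mk_le {μ : Cardinal} (hμ : ℵ₀ ≤ μ) {s : Set (succ μ).ord.ToType}
    (hs : #s ≤ μ) : ∃ w, ∀ v ∈ s, v < w := by
  refine not_isCofinal_iff.mp fun h => (cof_le h).not_gt ?_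
  rw [Ordinal.cof_toType, (isRegular_succ hμ).cof_ord]
  exact hs.trans_lt (lt_succ μ)

end Cardinal

theorem WellFoundedLT.exists_forall_image_Iio {W α : Type*} [LinearOrder W] [WellFoundedLT W]
    (P : Set α → α → Prop) (h : ∀ w : W, ∀ g : Iio w → α, ∃ y, P (range g) y) :
    ∃ f : W → α, ∀ w, P (f '' Iio w) (f w) := by
  choose next hnext using h
  refine ⟨wellFounded_lt.fix fun w ih => next w fun v => ih v v.2, fun w => ?_⟩
  rw [wellFounded_lt.fix_eq, image_eq_range]
  exact hnext w _

namespace ErdosRado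

variable {S C : Type}

def IsHomogeneous (c : Finset S → C) (n : ℕ) (H : Set S) : Prop :=
  ∀ t₁ t₂ : Finset S, ↑t₁ ⊆ H → ↑t₂ ⊆ H → t₁.card = n → t₂.card = n → c t₁ = c t₂

theorem IsHomogeneous.mono {c : Finset S → C} {n : ℕ} {H H' : Set S} (hH : IsHomogeneous c n H)
    (h : H' ⊆ H) : IsHomogeneous c n H' :=
  fun t₁ t₂ h₁ h₂ => hH t₁ t₂ (h₁.trans h) (h₂.trans h)

/-- The partition relation `lam → (θ)^n_C`. -/
def PartitionRel (lam θ : Cardinal) (n : ℕ) (C : Type) : Prop :=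
  ∀ S : Type, lam ≤ #S → ∀ c : Finset S → C, ∃ H : Set S, θ ≤ #H ∧ IsHomogeneous c n H

theorem partitionRel_succ_one {κ : Cardinal} (hκ : ℵ₀ ≤ κ) (hC : #C ≤ κ) :
    PartitionRel (succ κ) (succ κ) 1 C := by
  intro S hS c
  obtain ⟨col, hcol⟩ := infinite_pigeonhole_card (fun x : S => c {x}) (succ κ) hS
    (hκ.trans (le_succ κ)) (by rw [(isRegular_succ hκ).cof_ord]; exact hC.trans_lt (lt_succ κ))
  refine ⟨_, hcol, fun t₁ t₂ h₁ h₂ hc₁ hc₂ => ?_⟩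
  obtain ⟨x₁, rfl⟩ := Finset.card_eq_one.mp hc₁
  obtain ⟨x₂, rfl⟩ := Finset.card_eq_one.mp hc₂
  exact (h₁ (Finset.mem_singleton_self x₁)).trans (h₂ (Finset.mem_singleton_self x₂)).symm

section Types

variable [DecidableEq S] (c : Finset S → C)

def SameTypeOver (B : Set S) (x y : S) : Prop :=
  ∀ t : Finset S, ↑t ⊆ B → c (insert x t) = c (insert y t)

theorem exists_realizers (B : Set S) :
    ∃ R ⊆ Bᶜ, #R ≤ #C ^ #(Finset B) ∧ ∀ x ∉ B, ∃ y ∈ R, SameTypeOver c B y x := by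
  classical
  let type (x : S) (t : Finset B) : C := c (insert x (t.map (Function.Embedding.subtype _)))
  obtain ⟨R, hRB, hR⟩ := exists_subset_bijOn Bᶜ type
  refine ⟨R, hRB, ?_, fun x hx => ?_⟩
  · calc #R = #(type '' R) := (mk_image_eq_of_injOn _ _ hR.injOn).symm
      _ ≤ #(Finset B → C) := mk_set_le _
      _ = #C ^ #(Finset B) := (power_def _ _).symm
  · obtain ⟨y, hy, hxy⟩ := hR.surjOn (mem_image_of_mem type hx)
    refine ⟨y, hy, fun t ht => ?_⟩
    simpa only [type, Finset.subtype_map_of_mem ht] using congrFun hxy (t.subtype (· ∈ B))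

variable (μ : Cardinal)

def TypeClosed (A : Set S) : Prop :=
  ∀ B ⊆ A, #B ≤ μ → ∀ x ∉ B, ∃ y ∈ A, y ∉ B ∧ SameTypeOver c B y x

variable {c μ}

theorem exists_typeClosed (hμ : ℵ₀ ≤ μ) (hC : #C ≤ 2 ^ μ) :
    ∃ A : Set S, #A ≤ 2 ^ μ ∧ TypeClosed c μ A := by
  choose R hRB hR_card hR using exists_realizers c
  let step (X : Set S) : Set S := X ∪ ⋃ B : {B : Set S // B ⊆ X ∧ #B ≤ μ}, R B
  have h2μ : ℵ₀ ≤ 2 ^ μ := hμ.trans (cantor μ).le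
  have hstep_card (X : Set S) (hX : #X ≤ 2 ^ μ) : #(step X) ≤ 2 ^ μ := by
    refine (mk_union_le _ _).trans ((add_le_add hX (mk_iUnion_le_of_le h2μ ?_ ?_)).trans
      (add_eq_self h2μ).le)
    · exact (mk_bounded_subset_le X μ).trans
        (power_le_two_power hμ (max_le hX h2μ) le_rfl)
    · exact fun B => (hR_card B).trans
        (power_le_two_power hμ hC (mk_finset_le_of_le hμ B.2.2))
  let W := (succ μ).ord.ToType
  obtain ⟨A, hA⟩ := WellFoundedLT.exists_forall_image_Iio (W := W)
    (fun 𝒳 X => X = step (⋃₀ 𝒳)) fun _ _ => ⟨_, rfl⟩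
  have hA_card (w : W) : #(A w) ≤ 2 ^ μ := by
    induction w using WellFoundedLT.induction with
    | ind w ih =>
      rw [hA w, image_eq_range, sUnion_range]
      refine hstep_card _ (mk_iUnion_le_of_le h2μ ?_ fun v => ih v v.2)
      exact (mk_Iio_ord_succ_toType_le w).trans (cantor μ).le
  refine ⟨⋃ w, A w, mk_iUnion_le_of_le h2μ ?_ hA_card, fun B hBA hB x hxB => ?_⟩
  · exact (mk_ord_toType _).trans_le (succ_le_of_lt (cantor μ))
  have hlevel (b : B) : ∃ w, (b : S) ∈ A w := mem_iUnion.mp (hBA b.2)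
  choose level hlevel using hlevel
  obtain ⟨w, hw⟩ := exists_forall_lt_of_mk_le hμ (mk_range_le.trans hB : #(range level) ≤ μ)
  have hBX : B ⊆ ⋃₀ (A '' Iio w) := fun b hb =>
    ⟨A (level ⟨b, hb⟩), mem_image_of_mem A (hw _ (mem_range_self _)), hlevel ⟨b, hb⟩⟩
  obtain ⟨y, hyR, hy⟩ := hR B x hxB
  refine ⟨y, mem_iUnion.mpr ⟨w, ?_⟩, hRB B hyR, hy⟩
  rw [hA w]
  exact Or.inr (mem_iUnion.mpr ⟨⟨B, hBX, hB⟩, hyR⟩)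

variable {W : Type} [LinearOrder W]

def IsEndHomogeneousFor (c : Finset S → C) (a : S) (f : W → S) : Prop :=
  ∀ w, SameTypeOver c (f '' Iio w) (f w) a

theorem TypeClosed.exists_isEndHomogeneousFor [WellFoundedLT W] {A : Set S}
    (hA : TypeClosed c μ A) {a : S} (ha : a ∉ A) (hW : ∀ w : W, #(Iio w) ≤ μ) :
    ∃ f : W → S, Function.Injective f ∧ IsEndHomogeneousFor c a f := by
  obtain ⟨f, hf⟩ := WellFoundedLT.exists_forall_image_Iio (W := W) (α := A)
    (fun B y => y ∉ B ∧ SameTypeOver c (Subtype.val '' B) y a) fun w g => by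
      obtain ⟨y, hyA, hyg, hy⟩ := hA _ (Subtype.coe_image_subset A _)
        (mk_image_le.trans (mk_range_le.trans (hW w))) a
        fun h => ha (Subtype.coe_image_subset A _ h)
      exact ⟨⟨y, hyA⟩, fun h => hyg (mem_image_of_mem _ h), hy⟩
  refine ⟨Subtype.val ∘ f, Subtype.val_injective.comp fun u v huv => ?_, fun w => ?_⟩
  · by_contra hne
    rcases lt_or_gt_of_ne hne with h | h
    · exact (hf v).1 ⟨u, h, huv⟩
    · exact (hf u).1 ⟨v, h, huv.symm⟩
  · rw [image_comp]
    exact (hf w).2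

theorem IsEndHomogeneousFor.color_image_eq {a : S} {f : W → S} (hf : IsEndHomogeneousFor c a f)
    {s : Finset W} (hs : s.Nonempty) :
    c (s.image f) = c (insert a ((s.erase (s.max' hs)).image f)) := by
  conv_lhs => rw [← Finset.insert_erase (s.max'_mem hs), Finset.image_insert]
  refine hf _ _ fun x hx => ?_
  obtain ⟨v, hv, rfl⟩ := Finset.mem_image.mp hx
  exact mem_image_of_mem f (s.lt_max'_of_mem_erase_max' hs hv)

theorem IsEndHomogeneousFor.isHomogeneous_image {a : S} {f : W → S}
    (hf : IsEndHomogeneousFor c a f) (hinj : Function.Injective f) {n : ℕ} {H : Set W}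
    (hH : IsHomogeneous (fun s => c (insert a (s.image f))) n H) :
    IsHomogeneous c (n + 1) (f '' H) := by
  have reduce (t : Finset S) (ht : ↑t ⊆ f '' H) (htn : t.card = n + 1) :
      ∃ s : Finset W, ↑s ⊆ H ∧ s.card = n ∧ c t = c (insert a (s.image f)) := by
    obtain ⟨s, hsH, rfl⟩ := Finset.subset_set_image_iff.mp ht
    rw [Finset.card_image_of_injective _ hinj] at htn
    have hs : s.Nonempty := Finset.card_pos.mp (by omega)
    refine ⟨_, subset_trans (Finset.coe_subset.mpr (Finset.erase_subset _ _)) hsH, ?_,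
      hf.color_image_eq hs⟩
    rw [Finset.card_erase_of_mem (s.max'_mem hs), htn, Nat.add_sub_cancel]
  intro t₁ t₂ h₁ h₂ hc₁ hc₂
  obtain ⟨s₁, hs₁H, hs₁n, hct₁⟩ := reduce t₁ h₁ hc₁
  obtain ⟨s₂, hs₂H, hs₂n, hct₂⟩ := reduce t₂ h₂ hc₂
  rw [hct₁, hct₂]
  exact hH s₁ s₂ hs₁H hs₂H hs₁n hs₂n

end Types

theorem PartitionRel.two_power {μ θ : Cardinal} {n : ℕ} (hμ : ℵ₀ ≤ μ) (hC : #C ≤ 2 ^ μ)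
    (h : PartitionRel (succ μ) θ n C) : PartitionRel (succ (2 ^ μ)) θ (n + 1) C := by
  classical
  intro S hS c
  obtain ⟨A, hA_card, hA⟩ := exists_typeClosed (c := c) hμ hC
  obtain ⟨a, ha⟩ : ∃ a, a ∉ A := by
    by_contra! hA_univ
    rw [eq_univ_of_forall hA_univ, mk_univ] at hA_card
    exact (lt_succ_iff.mpr hA_card).not_ge hS
  obtain ⟨f, hf_inj, hf⟩ := hA.exists_isEndHomogeneousFor ha (W := (succ μ).ord.ToType)
    mk_Iio_ord_succ_toType_le
  obtain ⟨H, hH_card, hH⟩ := h _ (mk_ord_toType _).ge fun s => c (insert a (s.image f))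
  exact ⟨f '' H, (mk_image_eq hf_inj).symm ▸ hH_card, hf.isHomogeneous_image hf_inj hH⟩

theorem le_expIter (κ : Cardinal) (r : ℕ) : κ ≤ expIter r κ := by
  induction r with
  | zero => exact le_rfl
  | succ r ih => exact ih.trans (cantor _).le

theorem partitionRel_expIter {κ : Cardinal} (hκ : ℵ₀ ≤ κ) (hC : #C ≤ κ) (r : ℕ) :
    PartitionRel (succ (expIter r κ)) (succ κ) (r + 1) C := by
  induction r with
  | zero => exact partitionRel_succ_one hκ hC
  | succ r ih =>
    exact ih.two_power (hκ.trans (le_expIter κ r))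
      (hC.trans ((le_expIter κ r).trans (cantor _).le))

end ErdosRado

/-- (Erdős–Rado) `(exp_r(κ))⁺ → (κ⁺)^{r+1}_κ`: if `κ` is infinite, `S` has
cardinality at least `(exp_r(κ))⁺`, `C` has cardinality at most `κ`, and `c` colours
the `(r+1)`-element subsets of `S` by elements of `C`, then there is `H ⊆ S` of
cardinality `κ⁺` all of whose `(r+1)`-element subsets get the same colour. -/
theorem erdos_rado (κ : Cardinal) (hκ : Cardinal.aleph0 ≤ κ) (r : ℕ)
    (S : Type) (hS : Order.succ (expIter r κ) ≤ Cardinal.mk S)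
    (C : Type) (hC : Cardinal.mk C ≤ κ)
    (c : Finset S → C) :
    ∃ H : Set S, Cardinal.mk H = Order.succ κ ∧
      ∀ t₁ t₂ : Finset S, ↑t₁ ⊆ H → ↑t₂ ⊆ H →
        t₁.card = r + 1 → t₂.card = r + 1 → c t₁ = c t₂ := by
  obtain ⟨H₀, hH₀_card, hH₀⟩ := ErdosRado.partitionRel_expIter hκ hC r S hS c
  obtain ⟨H, hHH₀, hH_card⟩ := le_mk_iff_exists_subset.mp hH₀_card
  exact ⟨H, hH_card, hH₀.mono hHH₀⟩
end

section
/- (Erdős) For every natural number k there exists a finite simple graph G such that the chromatic number of G is greater than k and G contains no cycle of length less than k (equivalently, the girth of G is at least k). -/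
/-!
Erdős's deletion argument. Keep each pair of distinct vertices of `Fin n` as an edge independently
with probability `p`. A vertex on a cycle of length `ℓ < k` is the first entry of an injective
`ℓ`-tuple whose `ℓ` cyclically consecutive pairs are all edges, so the expected number of such
vertices is at most `∑_{3 ≤ ℓ < k} (n p)^ℓ`; the expected number of independent `(s + 1)`-sets is
`C(n, s + 1) (1 - p)^C(s + 1, 2)`. With `n p = x²`, `n = x^(2k+2)` and `s = n / (2k+2)` for a large
`x`, the first is at most `n / 4` and the second below `1 / 2`, so some graph has fewer than `n / 2`
vertices on short cycles and no independent `(s + 1)`-set. Deleting these vertices leaves a graph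
with no short cycles, more than `n / 2 ≥ k s` vertices and independence number at most `s`, hence
with chromatic number greater than `k`.
-/

open Finset SimpleGraph

section BernoulliWeight

variable {α : Type*} [Fintype α] [DecidableEq α] (p : ℝ)

/-- The probability of `E` for the random subset of `α` that contains each element independently
with probability `p`. -/
noncomputable def bernoulliWeight (E : Finset α) : ℝ := p ^ #E * (1 - p) ^ #Eᶜ

variable {p}

lemma bernoulliWeight_nonneg (hp0 : 0 ≤ p) (hp1 : p ≤ 1) (E : Finset α) :
    0 ≤ bernoulliWeight p E := by
  have : 0 ≤ 1 - p := by linarith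
  unfold bernoulliWeight
  positivity

lemma sum_bernoulliWeight_filter_subset_disjoint {S T : Finset α} (hST : Disjoint S T) :
    ∑ E with S ⊆ E ∧ Disjoint T E, bernoulliWeight p E = p ^ #S * (1 - p) ^ #T := by
  -- Expanding `∏ a, (f a + g a)` for the two functions below, the term of `E` vanishes unless
  -- `S ⊆ E` and `Disjoint T E`, and then equals `bernoulliWeight p E`.
  have key := Fintype.prod_add (fun a => if a ∉ T then p else 0)
    (fun a => if a ∉ S then 1 - p else 0)
  have hfactor (a : α) : ((if a ∉ T then p else 0) + if a ∉ S then 1 - p else 0) =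
      (if a ∈ S then p else 1) * (if a ∈ T then 1 - p else 1) := by
    by_cases haS : a ∈ S <;> by_cases haT : a ∈ T <;> simp [haS, haT]
    exact absurd haT (Finset.disjoint_left.mp hST haS)
  simp only [hfactor, prod_mul_distrib, prod_ite_mem, univ_inter, prod_const, prod_ite_zero] at key
  rw [key, sum_filter]
  refine sum_congr rfl fun E _ => ?_
  simp only [← Finset.disjoint_left, disjoint_compl_left_iff, ite_zero_mul_ite_zero,
    disjoint_comm (a := E), and_comm (a := Disjoint T E), bernoulliWeight]

lemma sum_bernoulliWeight : ∑ E : Finset α, bernoulliWeight p E = 1 := by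
  simpa using
    sum_bernoulliWeight_filter_subset_disjoint (p := p) (disjoint_empty_left (∅ : Finset α))

lemma sum_bernoulliWeight_filter_subset (S : Finset α) :
    ∑ E with S ⊆ E, bernoulliWeight p E = p ^ #S := by
  simpa using sum_bernoulliWeight_filter_subset_disjoint (p := p) (disjoint_empty_right S)

lemma sum_bernoulliWeight_filter_disjoint (T : Finset α) :
    ∑ E with Disjoint T E, bernoulliWeight p E = (1 - p) ^ #T := by
  simpa using sum_bernoulliWeight_filter_subset_disjoint (p := p) (disjoint_empty_left T)

end BernoulliWeight

section FirstMoment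

variable {β ι : Type*} [Fintype β]

lemma sum_mul_card_filter (w : β → ℝ) (I : Finset ι) (P : ι → β → Prop)
    [∀ i, DecidablePred (P i)] :
    ∑ b, w b * #{i ∈ I | P i b} = ∑ i ∈ I, ∑ b with P i b, w b := by
  simp only [card_filter, Nat.cast_sum, Nat.cast_ite, Nat.cast_one, Nat.cast_zero, mul_sum,
    mul_ite, mul_one, mul_zero, sum_filter]
  exact sum_comm

lemma exists_lt_one_of_sum_mul_lt_sum {w X : β → ℝ} (hw : ∀ b, 0 ≤ w b)
    (h : ∑ b, w b * X b < ∑ b, w b) : ∃ b, X b < 1 := by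
  obtain ⟨b, -, hb⟩ := exists_lt_of_sum_lt h
  exact ⟨b, by_contra fun hX => hb.not_ge (le_mul_of_one_le_right (hw b) (not_lt.mp hX))⟩

end FirstMoment

lemma val_finRotate {n : ℕ} (j : Fin n) : (finRotate n j : ℕ) = (j + 1) % n := by
  rw [finRotate_apply, Fin.val_add, Fin.val_one', Nat.add_mod_mod]

lemma finRotate_finRotate_ne {ℓ : ℕ} (hℓ : 3 ≤ ℓ) (j : Fin ℓ) :
    finRotate ℓ (finRotate ℓ j) ≠ j := by
  intro h
  have h' := congrArg Fin.val h
  rw [val_finRotate, val_finRotate] at h'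
  have hj := j.isLt
  rcases Nat.lt_or_ge ((j : ℕ) + 1) ℓ with h1 | h1
  · rw [Nat.mod_eq_of_lt h1] at h'
    rcases Nat.lt_or_ge ((j : ℕ) + 2) ℓ with h2 | h2
    · rw [Nat.mod_eq_of_lt h2] at h'
      omega
    · rw [show (j : ℕ) + 1 + 1 = ℓ by omega, Nat.mod_self] at h'
      omega
  · rw [show (j : ℕ) + 1 = ℓ by omega, Nat.mod_self, Nat.mod_eq_of_lt (by omega)] at h'
    omega

namespace SimpleGraph

variable {V W : Type*}

lemma Walk.adj_getVert_finRotate {G : SimpleGraph V} {v : V} (c : G.Walk v v)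
    (j : Fin c.length) : G.Adj (c.getVert j) (c.getVert (finRotate c.length j)) := by
  have hadj := c.adj_getVert_succ j.isLt
  rw [val_finRotate]
  rcases Nat.lt_or_ge ((j : ℕ) + 1) c.length with h | h
  · rwa [Nat.mod_eq_of_lt h]
  · have hj : (j : ℕ) + 1 = c.length := by omega
    rw [hj, c.getVert_length] at hadj
    rwa [hj, Nat.mod_self, Walk.getVert_zero]

lemma Walk.IsCycle.injective_getVert {G : SimpleGraph V} {v : V} {c : G.Walk v v}
    (hc : c.IsCycle) : Function.Injective fun j : Fin c.length => c.getVert j :=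
  fun i j h => Fin.ext (hc.getVert_injOn' (by simp; omega) (by simp; omega) h)

def shortCycleVerts (G : SimpleGraph V) (k : ℕ) : Set V :=
  {v | ∃ c : G.Walk v v, c.IsCycle ∧ c.length < k}

lemma le_length_of_isCycle_induce_compl_shortCycleVerts {G : SimpleGraph V} {k : ℕ}
    {v : ↥(G.shortCycleVerts k)ᶜ} {c : (G.induce (G.shortCycleVerts k)ᶜ).Walk v v}
    (hc : c.IsCycle) : k ≤ c.length := by
  by_contra! hlt
  let f := Embedding.induce (G := G) (G.shortCycleVerts k)ᶜ
  exact v.2 ⟨c.map f.toHom, (Walk.isCycle_map_iff_of_injective f.injective).mpr hc,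
    (c.length_map _).trans_lt hlt⟩

lemma ncard_setOf_isCycle_length_eq_le [Fintype V] [DecidableEq V] (G : SimpleGraph V)
    [DecidableRel G.Adj] (ℓ : ℕ) :
    {v | ∃ c : G.Walk v v, c.IsCycle ∧ c.length = ℓ}.ncard ≤
      #{f : Fin ℓ ↪ V | ∀ j, G.Adj (f j) (f (finRotate ℓ j))} := by
  rcases Nat.eq_zero_or_pos ℓ with rfl | hℓ
  · refine ((Set.ncard_eq_zero (Set.toFinite _)).mpr (Set.eq_empty_of_forall_notMem ?_)).trans_le
      (Nat.zero_le _)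
    rintro v ⟨c, hc, h⟩
    exact absurd hc.three_le_length (by omega)
  calc _ ≤ ((fun f : Fin ℓ ↪ V => f ⟨0, hℓ⟩) ''
          ↑({f : Fin ℓ ↪ V | ∀ j, G.Adj (f j) (f (finRotate ℓ j))} : Finset _)).ncard := by
        refine Set.ncard_le_ncard ?_ (Set.toFinite _)
        rintro v ⟨c, hc, rfl⟩
        exact ⟨⟨_, hc.injective_getVert⟩, by simpa using c.adj_getVert_finRotate, c.getVert_zero⟩
    _ ≤ _ := (Set.ncard_image_le (Set.toFinite _)).trans (Set.ncard_coe_finset _).le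

lemma ncard_shortCycleVerts_le [Fintype V] [DecidableEq V] (G : SimpleGraph V)
    [DecidableRel G.Adj] (k : ℕ) :
    (G.shortCycleVerts k).ncard ≤
      ∑ ℓ ∈ Ico 3 k, #{f : Fin ℓ ↪ V | ∀ j, G.Adj (f j) (f (finRotate ℓ j))} := by
  calc _ ≤ (⋃ ℓ ∈ Ico 3 k, {v | ∃ c : G.Walk v v, c.IsCycle ∧ c.length = ℓ}).ncard := by
        refine Set.ncard_le_ncard ?_ (Set.toFinite _)
        rintro v ⟨c, hc, hk⟩
        simp only [Set.mem_iUnion, mem_Ico]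
        exact ⟨c.length, ⟨hc.three_le_length, hk⟩, c, hc, rfl⟩
    _ ≤ _ := (set_ncard_biUnion_le _ _).trans
        (sum_le_sum fun ℓ _ => ncard_setOf_isCycle_length_eq_le G ℓ)

lemma IndepSetFree.comap {G : SimpleGraph V} {H : SimpleGraph W} {n : ℕ} (f : H ↪g G)
    (h : G.IndepSetFree n) : H.IndepSetFree n := by
  classical
  intro T hT
  refine h (T.map f.toEmbedding) ⟨?_, by rw [card_map, hT.card_eq]⟩
  rw [coe_map]
  rintro _ ⟨a, ha, rfl⟩ _ ⟨b, hb, rfl⟩ hab hadj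
  exact hT.isIndepSet ha hb (ne_of_apply_ne _ hab) (f.map_adj_iff.mp hadj)

lemma card_le_mul_of_colorable_of_indepSetFree [Finite V] {G : SimpleGraph V} {k s : ℕ}
    (hc : G.Colorable k) (hG : G.IndepSetFree (s + 1)) : Nat.card V ≤ k * s := by
  classical
  have := Fintype.ofFinite V
  obtain ⟨C⟩ := hc
  by_contra! hlt
  obtain ⟨c, -, hc⟩ := exists_lt_card_fiber_of_mul_lt_card_of_maps_to (s := univ) (t := univ)
    (f := C) (fun _ _ => mem_univ _) (by simpa [Nat.card_eq_fintype_card] using hlt)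
  obtain ⟨T, hTc, hT⟩ := exists_subset_card_eq hc
  exact hG T ⟨(C.isIndepSet_colorClass c).mono fun v hv => (mem_filter.mp (hTc hv)).2, hT⟩

/-! The random graph is `fromEdgeSet E` for a random `E : Finset (Sym2 V)`. The diagonal elements
of `E` are ignored by `fromEdgeSet`, so sampling them as well does no harm. -/

section RandomGraph

variable [DecidableEq V] {p : ℝ}

def cycleEdges {ℓ : ℕ} (f : Fin ℓ → V) : Finset (Sym2 V) :=
  univ.image fun j => s(f j, f (finRotate ℓ j))

lemma card_cycleEdges {ℓ : ℕ} (hℓ : 3 ≤ ℓ) {f : Fin ℓ → V} (hf : Function.Injective f) :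
    #(cycleEdges f) = ℓ := by
  rw [cycleEdges, card_image_of_injective _ ?_, card_univ, Fintype.card_fin]
  intro i j hij
  rcases Sym2.eq_iff.mp hij with ⟨h, -⟩ | ⟨h₁, h₂⟩
  · exact hf h
  · exact absurd (by rw [← hf h₁, hf h₂]) (finRotate_finRotate_ne hℓ j)

lemma disjoint_image_offDiag_of_isIndepSet {E : Finset (Sym2 V)} {T : Finset V}
    (hT : (fromEdgeSet (E : Set (Sym2 V))).IsIndepSet T) :
    Disjoint (T.offDiag.image Sym2.mk.uncurry) E := by
  rw [Finset.disjoint_left]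
  rintro _ he hE
  obtain ⟨⟨x, y⟩, hxy, rfl⟩ := mem_image.mp he
  obtain ⟨hx, hy, hne⟩ := mem_offDiag.mp hxy
  exact hT hx hy hne ((fromEdgeSet_adj _).mpr ⟨hE, hne⟩)

variable [Fintype V]

lemma ncard_shortCycleVerts_fromEdgeSet_le (E : Finset (Sym2 V)) (k : ℕ) :
    ((fromEdgeSet (E : Set (Sym2 V))).shortCycleVerts k).ncard ≤
      ∑ ℓ ∈ Ico 3 k, #{f : Fin ℓ ↪ V | cycleEdges f ⊆ E} := by
  classical
  refine (ncard_shortCycleVerts_le _ k).trans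
    (sum_le_sum fun ℓ _ => card_le_card (monotone_filter_right _ fun f _ hf => ?_))
  rintro _ he
  obtain ⟨j, -, rfl⟩ := mem_image.mp he
  exact ((fromEdgeSet_adj _).mp (hf j)).1

lemma sum_bernoulliWeight_mul_ncard_shortCycleVerts_le (hp0 : 0 ≤ p) (hp1 : p ≤ 1) (k : ℕ) :
    ∑ E : Finset (Sym2 V),
        bernoulliWeight p E * ((fromEdgeSet (E : Set (Sym2 V))).shortCycleVerts k).ncard ≤
      ∑ ℓ ∈ Ico 3 k, (Fintype.card V * p) ^ ℓ := by
  calc _ ≤ ∑ E : Finset (Sym2 V), bernoulliWeight p E *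
          ∑ ℓ ∈ Ico 3 k, (#{f : Fin ℓ ↪ V | cycleEdges f ⊆ E} : ℝ) := by
        refine sum_le_sum fun E _ => mul_le_mul_of_nonneg_left ?_ (bernoulliWeight_nonneg hp0 hp1 E)
        exact_mod_cast ncard_shortCycleVerts_fromEdgeSet_le E k
    _ = ∑ ℓ ∈ Ico 3 k, ∑ _f : Fin ℓ ↪ V, p ^ ℓ := by
        simp_rw [mul_sum]
        rw [sum_comm]
        refine sum_congr rfl fun ℓ hℓ => ?_
        rw [sum_mul_card_filter]
        refine sum_congr rfl fun f _ => ?_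
        rw [sum_bernoulliWeight_filter_subset, card_cycleEdges (mem_Ico.mp hℓ).1 f.injective]
    _ ≤ _ := sum_le_sum fun ℓ _ => by
        rw [sum_const, card_univ, Fintype.card_embedding_eq, Fintype.card_fin, nsmul_eq_mul,
          mul_pow]
        gcongr
        exact_mod_cast Nat.descFactorial_le_pow _ _

lemma sum_bernoulliWeight_mul_card_disjoint_image_offDiag (t : ℕ) :
    ∑ E : Finset (Sym2 V), bernoulliWeight p E *
        #{T ∈ powersetCard t univ | Disjoint (T.offDiag.image Sym2.mk.uncurry) E} =
      (Fintype.card V).choose t * (1 - p) ^ t.choose 2 := by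
  rw [sum_mul_card_filter, sum_congr rfl fun T hT => by
    rw [sum_bernoulliWeight_filter_disjoint, Sym2.card_image_offDiag, (mem_powersetCard.mp hT).2]]
  rw [sum_const, card_powersetCard, card_univ, nsmul_eq_mul]

theorem exists_two_mul_ncard_shortCycleVerts_lt_and_indepSetFree [Nonempty V] {k t : ℕ}
    (hp0 : 0 ≤ p) (hp1 : p ≤ 1)
    (hcyc : ∑ ℓ ∈ Ico 3 k, (Fintype.card V * p) ^ ℓ ≤ Fintype.card V / 4)
    (hind : (Fintype.card V).choose t * (1 - p) ^ t.choose 2 < 1 / 2) :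
    ∃ G : SimpleGraph V, 2 * (G.shortCycleVerts k).ncard < Fintype.card V ∧ G.IndepSetFree t := by
  set n := Fintype.card V
  have hn : (0 : ℝ) < n := by exact_mod_cast Fintype.card_pos
  let bad (E : Finset (Sym2 V)) : ℕ := ((fromEdgeSet (E : Set (Sym2 V))).shortCycleVerts k).ncard
  let indep (E : Finset (Sym2 V)) : ℕ :=
    #{T ∈ powersetCard t univ | Disjoint (T.offDiag.image Sym2.mk.uncurry) E}
  have hmean : ∑ E : Finset (Sym2 V), bernoulliWeight p E * (2 / n * bad E + indep E) <
      ∑ E : Finset (Sym2 V), bernoulliWeight p E := by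
    calc _ = 2 / n * ∑ E, bernoulliWeight p E * bad E + ∑ E, bernoulliWeight p E * indep E := by
          rw [mul_sum, ← sum_add_distrib]
          exact sum_congr rfl fun _ _ => by ring
      _ < 2 / n * (n / 4) + 1 / 2 := by
          rw [sum_bernoulliWeight_mul_card_disjoint_image_offDiag]
          refine add_lt_add_of_le_of_lt (mul_le_mul_of_nonneg_left ?_ (by positivity)) hind
          exact (sum_bernoulliWeight_mul_ncard_shortCycleVerts_le hp0 hp1 k).trans hcyc
      _ = _ := by
          rw [sum_bernoulliWeight]
          field_simp
          norm_num
  obtain ⟨E, hE⟩ := exists_lt_one_of_sum_mul_lt_sum (bernoulliWeight_nonneg hp0 hp1) hmean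
  have hbad : (0 : ℝ) ≤ 2 / n * bad E := by positivity
  have hindep : (0 : ℝ) ≤ indep E := Nat.cast_nonneg _
  refine ⟨fromEdgeSet ↑E, ?_, fun T hT => ?_⟩
  · have : 2 * (bad E : ℝ) < n := by
      rw [← div_lt_one hn, mul_div_right_comm]
      linarith
    exact_mod_cast this
  · have : indep E = 0 := Nat.lt_one_iff.mp (by exact_mod_cast (by linarith : (indep E : ℝ) < 1))
    exact filter_eq_empty_iff.mp (card_eq_zero.mp this)
      (mem_powersetCard.mpr ⟨subset_univ _, hT.card_eq⟩)
      (disjoint_image_offDiag_of_isIndepSet hT.isIndepSet)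

end RandomGraph

end SimpleGraph

lemma choose_mul_one_sub_pow_choose_two_lt_half {n s : ℕ} {p : ℝ} (hn : 0 < n) (hp1 : p ≤ 1)
    (h : 2 * Real.log n + 2 ≤ p * s) :
    (n.choose (s + 1) : ℝ) * (1 - p) ^ (s + 1).choose 2 < 1 / 2 := by
  have hchoose : (n.choose (s + 1) : ℝ) ≤ Real.exp ((s + 1 : ℕ) * Real.log n) := by
    rw [Real.exp_nat_mul, Real.exp_log (by positivity)]
    exact_mod_cast Nat.choose_le_pow n (s + 1)
  have hpow : (1 - p) ^ (s + 1).choose 2 ≤ Real.exp ((s + 1).choose 2 * -p) := by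
    rw [Real.exp_nat_mul]
    exact pow_le_pow_left₀ (by linarith) (by linarith [Real.add_one_le_exp (-p)]) _
  have htwo : ((s + 1).choose 2 : ℝ) = (s + 1) * s / 2 := by
    rw [Nat.cast_choose_two]
    push_cast
    ring
  calc _ ≤ Real.exp ((s + 1 : ℕ) * Real.log n) * Real.exp ((s + 1).choose 2 * -p) :=
        mul_le_mul hchoose hpow (by positivity) (by positivity)
    _ = Real.exp ((s + 1) * (Real.log n - p * s / 2)) := by
        rw [← Real.exp_add, htwo]
        push_cast
        ring_nf
    _ ≤ Real.exp (-1) := by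
        gcongr
        nlinarith
    _ < 1 / 2 := Real.exp_neg_one_lt_half

lemma exists_erdos_parameters (k : ℕ) :
    ∃ (n s : ℕ) (p : ℝ), 0 < n ∧ 0 ≤ p ∧ p ≤ 1 ∧ 2 * k * s ≤ n ∧
      ∑ ℓ ∈ Ico 3 k, ((n : ℝ) * p) ^ ℓ ≤ n / 4 ∧
      (n.choose (s + 1) : ℝ) * (1 - p) ^ (s + 1).choose 2 < 1 / 2 := by
  obtain ⟨c, hc⟩ : ∃ c, c = 2 * k + 2 := ⟨_, rfl⟩
  obtain ⟨x, hx⟩ : ∃ x, x = 4 * c ^ 2 := ⟨_, rfl⟩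
  have hxn : 0 < x := by subst hx hc; positivity
  have hx1 : (1 : ℝ) ≤ x := by exact_mod_cast hxn
  have hxk : (4 * k : ℝ) ≤ x := by rw [hx]; norm_cast; nlinarith
  have hp1 : (x : ℝ) ^ 2 / x ^ (2 * k + 2) ≤ 1 := by
    rw [div_le_one (by positivity)]
    exact pow_le_pow_right₀ hx1 (by omega)
  have hnp : (x ^ (2 * k + 2) : ℕ) * ((x : ℝ) ^ 2 / x ^ (2 * k + 2)) = (x : ℝ) ^ 2 := by
    push_cast
    field_simp
  refine ⟨x ^ (2 * k + 2), 4 * c * x ^ (2 * k + 1), x ^ 2 / x ^ (2 * k + 2), by positivity,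
    by positivity, hp1, ?_, ?_, ?_⟩
  · calc 2 * k * (4 * c * x ^ (2 * k + 1)) ≤ c * (4 * c * x ^ (2 * k + 1)) := by
          gcongr
          omega
      _ = x ^ (2 * k + 2) := by rw [hx]; ring
  · calc _ = ∑ ℓ ∈ Ico 3 k, ((x : ℝ) ^ 2) ^ ℓ := by rw [hnp]
      _ ≤ ∑ ℓ ∈ Ico 3 k, ((x : ℝ) ^ 2) ^ k :=
          sum_le_sum fun ℓ hℓ => pow_le_pow_right₀ (one_le_pow₀ hx1) (mem_Ico.mp hℓ).2.le
      _ ≤ k * ((x : ℝ) ^ 2) ^ k := by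
          rw [sum_const, Nat.card_Ico, nsmul_eq_mul]
          gcongr
          exact_mod_cast Nat.sub_le k 3
      _ ≤ (x : ℝ) ^ 2 / 4 * ((x : ℝ) ^ 2) ^ k := by
          gcongr
          nlinarith
      _ = ((x ^ (2 * k + 2) : ℕ) : ℝ) / 4 := by push_cast; ring
  · refine choose_mul_one_sub_pow_choose_two_lt_half (by positivity) hp1 ?_
    have hlog : Real.log ((x ^ (2 * k + 2) : ℕ) : ℝ) ≤ c * x := by
      rw [Nat.cast_pow, Real.log_pow, hc]
      push_cast
      gcongr
      exact Real.log_le_self (by positivity)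
    have hps : (x : ℝ) ^ 2 / x ^ (2 * k + 2) * ((4 * c * x ^ (2 * k + 1) : ℕ) : ℝ) =
        4 * c * x := by
      push_cast
      field_simp
      ring
    have hcx : (1 : ℝ) ≤ c * x := by
      rw [hc]
      push_cast
      nlinarith
    rw [hps]
    linarith

/-- (Erdős) For every `k` there is a finite simple graph with chromatic number
greater than `k` and no cycle of length less than `k` (girth at least `k`). -/
theorem erdos_high_chromatic_high_girth (k : ℕ) :
    ∃ (V : Type) (G : SimpleGraph V), Finite V ∧
      (k : ℕ∞) < G.chromaticNumber ∧
      ∀ (v : V) (w : G.Walk v v), w.IsCycle → k ≤ w.length := by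
  obtain ⟨n, s, p, hn, hp0, hp1, hks, hcyc, hind⟩ := exists_erdos_parameters k
  have : Nonempty (Fin n) := ⟨⟨0, hn⟩⟩
  obtain ⟨G, hbad, hG⟩ := exists_two_mul_ncard_shortCycleVerts_lt_and_indepSetFree (V := Fin n)
    (t := s + 1) hp0 hp1 (by simpa using hcyc) (by simpa using hind)
  refine ⟨↥(G.shortCycleVerts k)ᶜ, G.induce (G.shortCycleVerts k)ᶜ, inferInstance, ?_,
    fun v c hc => le_length_of_isCycle_induce_compl_shortCycleVerts hc⟩
  rw [← not_le, chromaticNumber_le_iff_colorable]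
  intro hcol
  have hgood := card_le_mul_of_colorable_of_indepSetFree hcol (hG.comap (Embedding.induce _))
  have hsplit := Set.ncard_add_ncard_compl (G.shortCycleVerts k)
  rw [Nat.card_coe_set_eq] at hgood
  rw [Nat.card_eq_fintype_card, Fintype.card_fin] at hsplit
  rw [Fintype.card_fin] at hbad
  nlinarith
end

section
/- (Vaught) Let T be a complete consistent theory in a countable first-order language such that for every n ∈ ℕ and every formula φ(x₀,…,x_{n−1}) consistent with T, there exists a formula ψ(x₀,…,x_{n−1}) complete for T such that every n-tuple satisfying ψ in any model of T also satisfies φ (i.e., the isolated types are dense). Then T has a countable atomic model: a countable model of T in which every finite tuple satisfies some formula complete for T. -/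
/-!
Fix a model `N` of `T` in which the empty tuple is isolated (it satisfies a complete sentence, which
exists by density). Inside `N` build `s₀, s₁, …` so that every initial segment realizes a complete
formula, while meeting countably many Tarski–Vaught requirements, each one revisited infinitely
often. The extension step: if `c(x)` isolates the type of `a` and `φ(a, y)` has a solution, density
gives a complete `ψ(x, y)` implying `c(x) ∧ φ(x, y)`; since `c` is complete and `ψ` is consistent,
`c(x)` implies `∃ y, ψ(x, y)`, so `a` extends inside `N` to a tuple isolated by `ψ` that solves `φ`.
The range of `s` then passes the Tarski–Vaught test, so it is a countable elementary submodel, and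
every tuple in it is a sub-tuple of an isolated initial segment, hence isolated.
-/

open FirstOrder FirstOrder.Language

universe u v

/-- A formula `ψ(x₀,…,x_{n−1})` is complete for `T` if it is consistent with `T` and
for every formula `χ`, either every tuple satisfying `ψ` in any model of `T`
satisfies `χ`, or every such tuple satisfies `¬χ`. -/
def CompleteFormula {L : FirstOrder.Language.{u, v}} (T : L.Theory) {n : ℕ}
    (ψ : L.Formula (Fin n)) : Prop :=
  ConsistentWith T ψ ∧ ∀ χ : L.Formula (Fin n),
    (∀ (M : Theory.ModelType.{u, v, max u v} T) (v : Fin n → M),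
        ψ.Realize v → χ.Realize v) ∨
    (∀ (M : Theory.ModelType.{u, v, max u v} T) (v : Fin n → M),
        ψ.Realize v → ¬ χ.Realize v)

theorem exists_seq_forall_exists_le_eq (α : Type*) [Nonempty α] [Countable α] :
    ∃ e : ℕ → α, ∀ a K, ∃ k, K ≤ k ∧ e k = a := by
  obtain ⟨e, he⟩ := exists_surjective_nat α
  refine ⟨fun k => e k.unpair.1, fun a K => ?_⟩
  obtain ⟨i, rfl⟩ := he a
  exact ⟨Nat.pair i K, Nat.right_le_pair i K, by simp⟩

theorem exists_seq_of_forall_exists_snoc {α : Type*} [Nonempty α]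
    (P : ∀ k, (Fin k → α) → Prop) (Q : ∀ k, (Fin k → α) → α → Prop) (h0 : P 0 Fin.elim0)
    (hstep : ∀ k a, P k a → ∃ b, P (k + 1) (Fin.snoc a b) ∧ Q k a b) :
    ∃ s : ℕ → α, ∀ k, P k (fun i : Fin k => s i) ∧ Q k (fun i => s i) (s k) := by
  choose! next hnext using hstep
  let s : ℕ → α := Nat.strongRec fun k prev => next k fun i : Fin k => prev i i.isLt
  have hs (k : ℕ) : s k = next k fun i : Fin k => s i := Nat.strongRec_eq _ k
  have hsnoc (k : ℕ) : (fun i : Fin (k + 1) => s i) = Fin.snoc (fun i : Fin k => s i) (s k) :=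
    (Fin.snoc_init_self _).symm
  have hP (k : ℕ) : P k fun i : Fin k => s i := by
    induction k with
    | zero => convert h0
    | succ k ih =>
      rw [hsnoc, hs k]
      exact (hnext k _ ih).1
  refine ⟨s, fun k => ⟨hP k, ?_⟩⟩
  rw [hs k]
  exact (hnext k _ (hP k)).2

namespace FirstOrder.Language.Formula

variable {L : Language} {M : Type*} [L.Structure M] {n k : ℕ}

noncomputable def exImage (g : Fin n → Fin k) (φ : L.Formula (Fin k)) : L.Formula (Fin n) :=
  iExs (Fin k) (φ.relabel Sum.inr ⊓
    iInf fun i : Fin n => (Term.var (Sum.inl i)).equal (Term.var (Sum.inr (g i))))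

@[simp]
theorem realize_exImage (g : Fin n → Fin k) (φ : L.Formula (Fin k)) (v : Fin n → M) :
    (φ.exImage g).Realize v ↔ ∃ w, φ.Realize w ∧ w ∘ g = v := by
  simp [exImage, funext_iff, eq_comm]

end FirstOrder.Language.Formula

namespace FirstOrder.Language.BoundedFormula

variable {L : Language} {M : Type*} [L.Structure M] {α : Type*} [IsEmpty α] {n : ℕ}

theorem realize_toFormula_relabel_isEmptyElim (φ : L.BoundedFormula α n) (v : Fin n → M) :
    (φ.toFormula.relabel (Sum.elim isEmptyElim id)).Realize v ↔ φ.Realize default v := by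
  rw [Formula.realize_relabel, realize_toFormula, Subsingleton.elim (_ ∘ Sum.inl) default]
  rfl

end FirstOrder.Language.BoundedFormula

def IsIsolated {L : Language} (T : L.Theory) {M : Type*} [L.Structure M] {n : ℕ}
    (a : Fin n → M) : Prop :=
  ∃ φ : L.Formula (Fin n), CompleteFormula T φ ∧ φ.Realize a

def IsolatedTypesDense {L : FirstOrder.Language.{u, v}} (T : L.Theory) : Prop :=
  ∀ (n : ℕ) (φ : L.Formula (Fin n)), ConsistentWith T φ →
    ∃ ψ : L.Formula (Fin n), CompleteFormula T ψ ∧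
      ∀ (M : Theory.ModelType.{u, v, max u v} T) (v : Fin n → M), ψ.Realize v → φ.Realize v

section Isolated

variable {L : FirstOrder.Language.{u, v}} {T : L.Theory} {n k : ℕ}

theorem CompleteFormula.exImage {φ : L.Formula (Fin k)} (hφ : CompleteFormula T φ)
    (g : Fin n → Fin k) : CompleteFormula T (φ.exImage g) := by
  obtain ⟨⟨M, w, hw⟩, hdec⟩ := hφ
  refine ⟨⟨M, w ∘ g, (Formula.realize_exImage _ _ _).2 ⟨w, hw, rfl⟩⟩, fun χ => ?_⟩
  refine (hdec (χ.relabel g)).imp (fun h N v hv => ?_) (fun h N v hv => ?_) <;>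
  · obtain ⟨w, hw, rfl⟩ := (Formula.realize_exImage _ _ _).1 hv
    simpa [Formula.realize_relabel] using h N w hw

theorem IsIsolated.comp {M : Type*} [L.Structure M] {a : Fin k → M} (ha : IsIsolated T a)
    (g : Fin n → Fin k) : IsIsolated T (a ∘ g) :=
  let ⟨φ, hφ, hφa⟩ := ha
  ⟨φ.exImage g, hφ.exImage g, (Formula.realize_exImage _ _ _).2 ⟨a, hφa, rfl⟩⟩

theorem FirstOrder.Language.ElementaryEmbedding.isIsolated_comp_iff {M N : Type*}
    [L.Structure M] [L.Structure N] (f : M ↪ₑ[L] N) {a : Fin n → M} :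
    IsIsolated T (f ∘ a) ↔ IsIsolated T a :=
  exists_congr fun φ => and_congr_right fun _ => f.map_formula φ a

theorem IsIsolated.exists_snoc_realize (hdense : IsolatedTypesDense T)
    {N : Theory.ModelType.{u, v, max u v} T} {a : Fin k → N} (ha : IsIsolated T a)
    {φ : L.Formula (Fin (k + 1))} {b : N} (hb : φ.Realize (Fin.snoc a b)) :
    ∃ b', IsIsolated T (Fin.snoc a b') ∧ φ.Realize (Fin.snoc a b') := by
  obtain ⟨c, hc, hca⟩ := ha
  obtain ⟨ψ, hψ, hψc⟩ := hdense (k + 1) (c.relabel Fin.castSucc ⊓ φ)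
    ⟨N, Fin.snoc a b, by simpa [Formula.realize_relabel, Fin.snoc_comp_castSucc] using ⟨hca, hb⟩⟩
  have hcψ : ∀ (M : Theory.ModelType.{u, v, max u v} T) (v : Fin k → M),
      c.Realize v → (ψ.exImage Fin.castSucc).Realize v := by
    refine (hc.2 _).resolve_right fun hneg => ?_
    obtain ⟨M, w, hw⟩ := hψ.1
    have hcw : c.Realize (w ∘ Fin.castSucc) := by
      simpa [Formula.realize_relabel] using ((Formula.realize_inf ..).1 (hψc M w hw)).1
    exact hneg M _ hcw ((Formula.realize_exImage _ _ _).2 ⟨w, hw, rfl⟩)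
  obtain ⟨w, hw, hwa⟩ := (Formula.realize_exImage _ _ _).1 (hcψ N a hca)
  have hw_snoc : Fin.snoc a (w (Fin.last k)) = w := by
    rw [← hwa]
    exact Fin.snoc_init_self w
  refine ⟨w (Fin.last k), ⟨ψ, hψ, ?_⟩, ?_⟩ <;> rw [hw_snoc]
  · exact hw
  · exact ((Formula.realize_inf ..).1 (hψc N w hw)).2

theorem IsIsolated.exists_snoc (hdense : IsolatedTypesDense T)
    {N : Theory.ModelType.{u, v, max u v} T} {a : Fin k → N} (ha : IsIsolated T a)
    (φ : L.Formula (Fin (k + 1))) :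
    ∃ b, IsIsolated T (Fin.snoc a b) ∧
      ∀ b', φ.Realize (Fin.snoc a b') → φ.Realize (Fin.snoc a b) := by
  by_cases h : ∃ b', φ.Realize (Fin.snoc a b')
  · obtain ⟨b', hb'⟩ := h
    obtain ⟨b, hb, hφ⟩ := ha.exists_snoc_realize hdense hb'
    exact ⟨b, hb, fun _ _ => hφ⟩
  · obtain ⟨b, hb, -⟩ := ha.exists_snoc_realize hdense (φ := ⊤) (b := Classical.arbitrary N)
      (Formula.realize_top.2 trivial)
    exact ⟨b, hb, fun b' hb' => absurd ⟨b', hb'⟩ h⟩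

theorem isIsolated_of_forall_mem_range {M : Type*} [L.Structure M] {s : ℕ → M}
    (hs : ∀ k, IsIsolated T fun i : Fin k => s i) {x : Fin n → M} (hx : ∀ i, x i ∈ Set.range s) :
    IsIsolated T x := by
  choose j hj using hx
  obtain ⟨m, hm⟩ := Finite.exists_le j
  have hx : (fun i : Fin (m + 1) => s i) ∘ (fun i => ⟨j i, Nat.lt_succ_of_le (hm i)⟩) = x :=
    funext hj
  exact hx ▸ (hs (m + 1)).comp _

end Isolated

namespace FirstOrder.Language

variable (L : Language) {M : Type*} [L.Structure M]

def IsTarskiVaughtSet (A : Set M) : Prop :=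
  ∀ (n : ℕ) (φ : L.Formula (Fin (n + 1))) (x : Fin n → M), (∀ i, x i ∈ A) →
    ∀ a, φ.Realize (Fin.snoc x a) → ∃ b ∈ A, φ.Realize (Fin.snoc x b)

namespace IsTarskiVaughtSet

variable {L} {A : Set M}

theorem closedUnder (hA : L.IsTarskiVaughtSet A) {n : ℕ} (f : L.Functions n) : ClosedUnder f A := by
  intro x hx
  obtain ⟨b, hbA, hb⟩ := hA n ((Term.func f fun i => Term.var i.castSucc).equal
    (Term.var (Fin.last n))) x hx (Structure.funMap f x) (by simp)
  simp only [Formula.realize_equal, Term.realize_func, Term.realize_var, Fin.snoc_castSucc,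
    Fin.snoc_last] at hb
  exact hb ▸ hbA

variable (hA : L.IsTarskiVaughtSet A)

def toSubstructure : L.Substructure M where
  carrier := A
  fun_mem := hA.closedUnder

theorem isElementary : hA.toSubstructure.IsElementary :=
  Substructure.isElementary_of_exists _ fun n φ x a hφ => by
    obtain ⟨b, hbA, hb⟩ := hA n (φ.toFormula.relabel (Sum.elim isEmptyElim id)) (Subtype.val ∘ x)
      (fun i => (x i).2) a (by rwa [BoundedFormula.realize_toFormula_relabel_isEmptyElim])
    exact ⟨⟨b, hbA⟩, by rwa [BoundedFormula.realize_toFormula_relabel_isEmptyElim] at hb⟩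

def toElementarySubstructure : L.ElementarySubstructure M :=
  ⟨hA.toSubstructure, hA.isElementary⟩

end IsTarskiVaughtSet

end FirstOrder.Language

/-- The requirement `⟨n, j, φ⟩`: find a witness `y` of `φ(s (j 0), …, s (j (n-1)), y)`. -/
abbrev TarskiVaughtTask (L : FirstOrder.Language) : Type _ :=
  Σ n, (Fin n → ℕ) × L.Formula (Fin (n + 1))

section Construction

variable {L : FirstOrder.Language.{u, v}}

/-- At stage `k` a task is read as a formula in `x₀, …, x_k` with `y = x_k`; it is `⊤` while some
`s (j i)` is not yet built. -/
noncomputable def taskFormula (k : ℕ) (t : TarskiVaughtTask L) : L.Formula (Fin (k + 1)) :=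
  if hj : ∀ i, t.2.1 i < k then
    t.2.2.relabel (Fin.snoc (fun i => Fin.castSucc ⟨t.2.1 i, hj i⟩) (Fin.last k))
  else ⊤

theorem realize_taskFormula {M : Type*} [L.Structure M] {k n : ℕ} {j : Fin n → ℕ}
    (hj : ∀ i, j i < k) (φ : L.Formula (Fin (n + 1))) (s : ℕ → M) (b : M) :
    (taskFormula k ⟨n, j, φ⟩).Realize (Fin.snoc (fun i : Fin k => s i) b) ↔
      φ.Realize (Fin.snoc (s ∘ j) b) := by
  rw [taskFormula, dif_pos hj, Formula.realize_relabel, Fin.comp_snoc]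
  simp only [Function.comp_def, Fin.snoc_castSucc, Fin.snoc_last]

theorem exists_seq_isIsolated_isTarskiVaught [Countable L.Symbols] {T : L.Theory}
    (hdense : IsolatedTypesDense T) {N : Theory.ModelType.{u, v, max u v} T}
    (h0 : IsIsolated T (Fin.elim0 : Fin 0 → N)) :
    ∃ s : ℕ → N, (∀ k, IsIsolated T fun i : Fin k => s i) ∧ L.IsTarskiVaughtSet (Set.range s) := by
  have : Nonempty (TarskiVaughtTask L) := ⟨⟨0, Fin.elim0, ⊤⟩⟩
  obtain ⟨e, he⟩ := exists_seq_forall_exists_le_eq (TarskiVaughtTask L)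
  obtain ⟨s, hs⟩ := exists_seq_of_forall_exists_snoc (fun _ a => IsIsolated T a)
    (fun k a b => ∀ b', (taskFormula k (e k)).Realize (Fin.snoc a b') →
      (taskFormula k (e k)).Realize (Fin.snoc a b))
    h0 fun k _ ha => ha.exists_snoc hdense _
  refine ⟨s, fun k => (hs k).1, ?_⟩
  rintro n φ x hx a ha
  choose j hj using hx
  obtain rfl : s ∘ j = x := funext hj
  obtain ⟨m, hm⟩ := Finite.exists_le j
  obtain ⟨k, hmk, hek⟩ := he ⟨n, j, φ⟩ (m + 1)
  have hjk : ∀ i, j i < k := fun i => (Nat.lt_succ_of_le (hm i)).trans_le hmk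
  have hwitness := (hs k).2 a
  rw [hek, realize_taskFormula hjk, realize_taskFormula hjk] at hwitness
  exact ⟨s k, Set.mem_range_self k, hwitness ha⟩

end Construction

/-- (Vaught) If `T` is a complete consistent theory in a countable language whose
isolated types are dense (every formula consistent with `T` lies above a complete
formula), then `T` has a countable atomic model. -/
theorem vaught_atomic_model {L : FirstOrder.Language.{u, v}}
    (hL : L.card ≤ Cardinal.aleph0)
    (T : L.Theory) (hT : T.IsComplete)
    (hdense : ∀ (n : ℕ) (φ : L.Formula (Fin n)), ConsistentWith T φ →
      ∃ ψ : L.Formula (Fin n), CompleteFormula T ψ ∧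
        ∀ (M : Theory.ModelType.{u, v, max u v} T) (v : Fin n → M),
          ψ.Realize v → φ.Realize v) :
    ∃ M : Theory.ModelType.{u, v, max u v} T, Countable M ∧
      ∀ (n : ℕ) (a : Fin n → M),
        ∃ φ : L.Formula (Fin n), CompleteFormula T φ ∧ φ.Realize a := by
  have : Countable L.Symbols := Cardinal.mk_le_aleph0_iff.1 hL
  obtain ⟨M₀⟩ := hT.1
  obtain ⟨ψ, hψ, -⟩ := hdense 0 ⊤ ⟨M₀, Fin.elim0, Formula.realize_top.2 trivial⟩
  obtain ⟨N, v, hv⟩ := hψ.1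
  obtain ⟨s, hs, hA⟩ := exists_seq_isIsolated_isTarskiVaught hdense (N := N)
    ⟨ψ, hψ, Subsingleton.elim v Fin.elim0 ▸ hv⟩
  refine ⟨hA.toElementarySubstructure.toModel T, (Set.countable_range s).to_subtype, fun n a => ?_⟩
  exact (ElementaryEmbedding.isIsolated_comp_iff hA.toElementarySubstructure.subtype).1
    (isIsolated_of_forall_mem_range hs fun i => (a i).2)
end
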